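/- arXiv:1710.06084 — 12 statements merged into one kernel-verified Lean document; each statement's English description precedes it below -/
import Mathlib

section
/- Let T be a nilpotent linear operator on a finite-dimensional vector space V over a field, and let q : V → V/Im(T) be the canonical projection. Define the weight K(v) of a nonzero vector v to be the least m with T^m v = 0. Then the orbit {T^k b : b ∈ B, T^k b ≠ 0} of any K-minimum-weight set B whose image under q is a basis of V/Im(T) is a Jordan basis of V for T (i.e., a basis of V that is a disjoint union of T-orbits). -/
/-- A `q`-basis: a finite set mapping injectively under the quotient map
`q : V → V/Im(T)` to a basis of `V/Im(T)`. -/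
def IsQBasis {k V : Type*} [Field k] [AddCommGroup V] [Module k V]
    (T : V →ₗ[k] V) (B : Finset V) : Prop :=
  Set.InjOn (Submodule.mkQ (LinearMap.range T)) (B : Set V) ∧
  LinearIndependent k (fun b : B => Submodule.mkQ (LinearMap.range T) b) ∧
  Submodule.span k (Submodule.mkQ (LinearMap.range T) '' (B : Set V)) = ⊤

/-!
Write `q : V → V ⧸ range T`. The heart of the argument is an exchange property of a
minimum-weight `q`-basis `B`: if `w ≡ c • b₀` modulo `span (B \ {b₀}) + range T` with `c ≠ 0`,
then replacing `b₀` by `w` gives another `q`-basis, so `K b₀ ≤ K w`, i.e. `T ^ m w = 0` forces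
`T ^ m b₀ = 0`. A linear relation among orbit vectors, pushed down by the least exponent `m₀`
occurring in it, yields such a `w` with `T ^ m₀ w = 0` while `T ^ m₀ b₀ ≠ 0`; a coincidence
`T ^ m b = T ^ m' b'` yields one in the same way. Spanning needs no minimality: the span of the
orbits is `T`-invariant and together with `range T` spans `V`, which for nilpotent `T` forces it
to be everything.
-/

open Submodule LinearMap Finset

section

variable {k V : Type*} [Field k] [AddCommGroup V] [Module k V]

theorem isQBasis_iff {T : V →ₗ[k] V} {B : Finset V} :
    IsQBasis T B ↔
      LinearIndepOn k (range T).mkQ (B : Set V) ∧ span k ((range T).mkQ '' (B : Set V)) = ⊤ :=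
  ⟨fun h => ⟨h.2.1, h.2.2⟩, fun h => ⟨h.1.injOn, h.1, h.2⟩⟩

theorem IsQBasis.sup_range_eq_top {T : V →ₗ[k] V} {B : Finset V} (hB : IsQBasis T B) :
    span k (B : Set V) ⊔ range T = ⊤ := by
  rw [sup_comm, ← map_mkQ_eq_top, Submodule.map_span]
  exact hB.2.2

theorem eq_top_of_sup_range_eq_top {T : V →ₗ[k] V} (hT : IsNilpotent T) {W : Submodule k V}
    (hW : W.map T ≤ W) (hWT : W ⊔ range T = ⊤) : W = ⊤ := by
  obtain ⟨n, hn⟩ := hT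
  have key : ∀ j, W ⊔ range (T ^ j) = ⊤ := by
    intro j
    induction j with
    | zero => rw [pow_zero, Module.End.one_eq_id, range_id, sup_top_eq]
    | succ j ih =>
      have hmap : range T ≤ W ⊔ range (T ^ (j + 1)) := by
        rw [← Submodule.map_top, ← ih, Submodule.map_sup, pow_succ', Module.End.mul_eq_comp, range_comp]
        exact sup_le_sup_right hW _
      rw [eq_top_iff, ← hWT]
      exact sup_le le_sup_left hmap
  simpa [hn] using key n

theorem span_orbit_eq_top {T : V →ₗ[k] V} (hT : IsNilpotent T) {B : Finset V}
    (hB : span k (B : Set V) ⊔ range T = ⊤) :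
    span k {v : V | ∃ b ∈ B, ∃ m : ℕ, v = (T ^ m) b ∧ v ≠ 0} = ⊤ := by
  set S := {v : V | ∃ b ∈ B, ∃ m : ℕ, v = (T ^ m) b ∧ v ≠ 0}
  have hpow : ∀ b ∈ B, ∀ m : ℕ, (T ^ m) b ∈ span k S := fun b hb m => by
    by_cases h : (T ^ m) b = 0
    · rw [h]; exact zero_mem _
    · exact subset_span ⟨b, hb, m, rfl, h⟩
  refine eq_top_of_sup_range_eq_top hT ?_ (eq_top_iff.2 (hB ▸ sup_le_sup_right ?_ _))
  · rw [Submodule.map_span, span_le]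
    rintro _ ⟨_, ⟨b, hb, m, rfl, -⟩, rfl⟩
    rw [← Module.End.mul_apply, ← pow_succ']
    exact hpow b hb (m + 1)
  · exact span_le.2 fun b hb => by simpa using hpow b hb 0

theorem pow_apply_mem_span_sup_range {T : V →ₗ[k] V} {s : Set V} {b : V} {j : ℕ}
    (h : b ∈ s ∨ j ≠ 0) : (T ^ j) b ∈ span k s ⊔ range T := by
  cases j with
  | zero => exact mem_sup_left (subset_span (by simpa using h))
  | succ i => exact mem_sup_right ⟨(T ^ i) b, by rw [pow_succ', Module.End.mul_apply]⟩

section Exchange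

variable [DecidableEq V] {T : V →ₗ[k] V} {B : Finset V} {b₀ w : V}

theorem IsQBasis.mkQ_notMem_span_erase (hB : IsQBasis T B) (hb₀ : b₀ ∈ B) {c : k} (hc : c ≠ 0)
    (hw : w - c • b₀ ∈ span k (B.erase b₀ : Set V) ⊔ range T) :
    (range T).mkQ w ∉ span k ((range T).mkQ '' (B.erase b₀ : Set V)) := by
  set q := (range T).mkQ
  have hqw : q (w - c • b₀) ∈ span k (q '' (B.erase b₀ : Set V)) := by
    rwa [sup_comm, ← comap_map_mkQ, mem_comap, Submodule.map_span] at hw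
  have hb₀' : q b₀ ∉ span k (q '' (B.erase b₀ : Set V)) := by
    have hli : LinearIndepOn k q (insert b₀ (B.erase b₀ : Set V)) := by
      rw [← coe_insert, insert_erase hb₀]
      exact hB.2.1
    exact ((linearIndepOn_insert (by simp)).1 hli).2
  intro hmem
  refine hb₀' ((smul_mem_iff _ hc).1 ?_)
  rw [map_sub, map_smul] at hqw
  simpa using sub_mem hmem hqw

theorem IsQBasis.exchange (hB : IsQBasis T B) (hb₀ : b₀ ∈ B)
    (hw : (range T).mkQ w ∉ span k ((range T).mkQ '' (B.erase b₀ : Set V))) :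
    IsQBasis T (insert w (B.erase b₀)) := by
  set q := (range T).mkQ
  rw [isQBasis_iff] at hB ⊢
  have hwB : w ∉ (B.erase b₀ : Set V) := fun h => hw (subset_span ⟨w, h, rfl⟩)
  rw [coe_insert]
  refine ⟨(linearIndepOn_insert hwB).2 ⟨hB.1.mono (by simp), hw⟩, ?_⟩
  have hb₀ : q b₀ ∈ span k (q '' insert w (B.erase b₀ : Set V)) := by
    have hwspan : q w ∈ span k (q '' insert b₀ (B.erase b₀ : Set V)) := by
      rw [← coe_insert, insert_erase hb₀, hB.2]
      trivial
    rw [Set.image_insert_eq] at hwspan ⊢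
    exact mem_span_insert_exchange hwspan hw
  rw [eq_top_iff, ← hB.2, span_le]
  rintro _ ⟨b, hb, rfl⟩
  by_cases hbb₀ : b = b₀
  · exact hbb₀ ▸ hb₀
  · exact subset_span ⟨b, by simp [hbb₀, hb], rfl⟩

variable {K : V → ℕ} (hmin : ∀ B' : Finset V, IsQBasis T B' → ∑ b ∈ B, K b ≤ ∑ b ∈ B', K b)
include hmin

theorem IsQBasis.weight_le (hB : IsQBasis T B) (hb₀ : b₀ ∈ B)
    (hw : (range T).mkQ w ∉ span k ((range T).mkQ '' (B.erase b₀ : Set V))) : K b₀ ≤ K w := by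
  have hwB : w ∉ B.erase b₀ := fun h => hw (subset_span ⟨w, h, rfl⟩)
  have := hmin _ (hB.exchange hb₀ hw)
  rw [sum_insert hwB, ← add_sum_erase B K hb₀] at this
  omega

variable (hT : IsNilpotent T) (hK : ∀ v, K v = sInf {m : ℕ | (T ^ m) v = 0})
include hT hK

theorem IsQBasis.pow_apply_eq_zero_of_sub_smul_mem (hB : IsQBasis T B) (hb₀ : b₀ ∈ B) {c : k}
    (hc : c ≠ 0) (hw : w - c • b₀ ∈ span k (B.erase b₀ : Set V) ⊔ range T) {m : ℕ}
    (hTw : (T ^ m) w = 0) : (T ^ m) b₀ = 0 := by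
  obtain ⟨n, hn⟩ := hT
  have hKw : K w ≤ m := hK w ▸ Nat.sInf_le hTw
  have hKb₀ : (T ^ K b₀) b₀ = 0 := by
    rw [hK b₀]
    exact Nat.sInf_mem (s := {m : ℕ | (T ^ m) b₀ = 0}) ⟨n, by simp [hn]⟩
  exact Module.End.pow_map_zero_of_le
    ((hB.weight_le hmin hb₀ (hB.mkQ_notMem_span_erase hb₀ hc hw)).trans hKw) hKb₀

theorem IsQBasis.pow_apply_eq_zero_of_pow_apply_eq (hB : IsQBasis T B) {b b' : V} (hb : b ∈ B)
    (hb' : b' ∈ B) (hbb' : b ≠ b') {m m' : ℕ} (hmm' : m ≤ m')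
    (heq : (T ^ m) b = (T ^ m') b') : (T ^ m) b = 0 := by
  refine hB.pow_apply_eq_zero_of_sub_smul_mem hmin hT hK hb one_ne_zero
    (w := b - (T ^ (m' - m)) b') ?_ ?_
  · rw [one_smul, sub_sub_cancel_left, neg_mem_iff]
    exact pow_apply_mem_span_sup_range (Or.inl (mem_erase.2 ⟨hbb'.symm, hb'⟩))
  · rw [map_sub, ← Module.End.mul_apply, ← pow_add, Nat.add_sub_cancel' hmm', heq, sub_self]

theorem IsQBasis.eq_empty_of_sum_smul_orbit_eq_zero (hB : IsQBasis T B) {t : Finset V}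
    (ht : ∀ v ∈ t, ∃ b ∈ B, ∃ m : ℕ, v = (T ^ m) b ∧ v ≠ 0) {g : V → k}
    (hg : ∀ v ∈ t, g v ≠ 0) (hsum : ∑ v ∈ t, g v • v = 0) : t = ∅ := by
  by_contra hne
  choose! base hbase exp hexp hv0 using ht
  obtain ⟨v₀, hv₀, hexp₀⟩ := t.exists_min_image exp (nonempty_iff_ne_empty.2 hne)
  have hTw : (T ^ exp v₀) (∑ v ∈ t, g v • (T ^ (exp v - exp v₀)) (base v)) = 0 := by
    rw [map_sum, ← hsum]
    refine sum_congr rfl fun v hv => ?_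
    rw [map_smul, ← Module.End.mul_apply, ← pow_add, Nat.add_sub_cancel' (hexp₀ v hv),
      ← hexp v hv]
  refine hv0 v₀ hv₀ ?_
  rw [hexp v₀ hv₀]
  refine hB.pow_apply_eq_zero_of_sub_smul_mem hmin hT hK (hbase v₀ hv₀) (hg v₀ hv₀) ?_ hTw
  rw [← add_sum_erase t _ hv₀, Nat.sub_self, pow_zero, Module.End.one_apply, add_sub_cancel_left]
  refine sum_mem fun v hv => smul_mem _ _ (pow_apply_mem_span_sup_range ?_)
  obtain ⟨hvv₀, hvt⟩ := mem_erase.1 hv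
  by_contra! h
  have hbase_eq : base v = base v₀ := by
    by_contra hb
    exact h.1 (mem_erase.2 ⟨hb, hbase v hvt⟩)
  have hexp_eq : exp v = exp v₀ := by have := hexp₀ v hvt; omega
  exact hvv₀ (by rw [hexp v hvt, hexp v₀ hv₀, hbase_eq, hexp_eq])

theorem IsQBasis.linearIndependent_orbit (hB : IsQBasis T B) :
    LinearIndependent k
      (Subtype.val : {v : V | ∃ b ∈ B, ∃ m : ℕ, v = (T ^ m) b ∧ v ≠ 0} → V) := by
  rw [linearIndependent_subtype_iff, linearIndepOn_iff]
  intro l hl hsum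
  rw [← Finsupp.support_eq_empty]
  refine hB.eq_empty_of_sum_smul_orbit_eq_zero hmin hT hK (fun v hv => hl hv)
    (fun v hv => Finsupp.mem_support_iff.1 hv) ?_
  simpa [Finsupp.linearCombination_apply, Finsupp.sum] using hsum

end Exchange

end

theorem stmt0_general {k V : Type*} [Field k] [AddCommGroup V] [Module k V]
    (T : V →ₗ[k] V) (hT : ∃ n : ℕ, T ^ n = 0)
    (K : V → ℕ) (hK : ∀ v, K v = sInf {m : ℕ | (T ^ m) v = 0})
    (B : Finset V) (hB : IsQBasis T B)
    (hmin : ∀ B' : Finset V, IsQBasis T B' → ∑ b ∈ B, K b ≤ ∑ b ∈ B', K b) :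
    LinearIndependent k
      (Subtype.val : {v : V | ∃ b ∈ B, ∃ m : ℕ, v = (T ^ m) b ∧ v ≠ 0} → V) ∧
    Submodule.span k {v : V | ∃ b ∈ B, ∃ m : ℕ, v = (T ^ m) b ∧ v ≠ 0} = ⊤ ∧
    ∀ b ∈ B, ∀ b' ∈ B, b ≠ b' →
      Disjoint {v : V | ∃ m : ℕ, v = (T ^ m) b ∧ v ≠ 0}
        {v : V | ∃ m : ℕ, v = (T ^ m) b' ∧ v ≠ 0} := by
  classical
  refine ⟨hB.linearIndependent_orbit hmin hT hK, span_orbit_eq_top hT hB.sup_range_eq_top, ?_⟩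
  intro b hb b' hb' hbb'
  rw [Set.disjoint_left]
  rintro _ ⟨m, rfl, hv⟩ ⟨m', heq, -⟩
  rcases le_total m m' with h | h
  · exact hv (hB.pow_apply_eq_zero_of_pow_apply_eq hmin hT hK hb hb' hbb' h heq)
  · exact hv (heq ▸ hB.pow_apply_eq_zero_of_pow_apply_eq hmin hT hK hb' hb hbb'.symm h heq.symm)

theorem stmt0 {k V : Type*} [Field k] [AddCommGroup V] [Module k V]
    [FiniteDimensional k V] (T : V →ₗ[k] V) (hT : ∃ n : ℕ, T ^ n = 0)
    (K : V → ℕ) (hK : ∀ v, K v = sInf {m : ℕ | (T ^ m) v = 0})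
    (B : Finset V) (hB : IsQBasis T B)
    (hmin : ∀ B' : Finset V, IsQBasis T B' → ∑ b ∈ B, K b ≤ ∑ b ∈ B', K b) :
    LinearIndependent k
      (Subtype.val : {v : V | ∃ b ∈ B, ∃ m : ℕ, v = (T ^ m) b ∧ v ≠ 0} → V) ∧
    Submodule.span k {v : V | ∃ b ∈ B, ∃ m : ℕ, v = (T ^ m) b ∧ v ≠ 0} = ⊤ ∧
    ∀ b ∈ B, ∀ b' ∈ B, b ≠ b' →
      Disjoint {v : V | ∃ m : ℕ, v = (T ^ m) b ∧ v ≠ 0}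
        {v : V | ∃ m : ℕ, v = (T ^ m) b' ∧ v ≠ 0} :=
  stmt0_general T hT K hK B hB hmin
end

section
/- Let T be a nilpotent linear operator on a finite-dimensional vector space V, with q : V → V/Im(T) the canonical projection. A q-basis B has minimum K-weight if and only if for every m, the image under q of B ∩ Ker(T^m) spans the image under q of Ker(T^m). -/
open Module Submodule Finset

theorem Finset.sum_add_sum_card_filter_le {α : Type*} (s : Finset α) (f : α → ℕ) {N : ℕ}
    (hf : ∀ x ∈ s, f x ≤ N) :
    ∑ x ∈ s, f x + ∑ m ∈ range N, #{x ∈ s | f x ≤ m} = N * #s := by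
  have hx : ∀ x ∈ s, f x + #{m ∈ range N | f x ≤ m} = N := fun x hx => by
    rw [show {m ∈ range N | f x ≤ m} = Ico (f x) N by ext; simp; omega, Nat.card_Ico]
    have := hf x hx
    omega
  simp only [card_filter]
  rw [sum_comm, ← sum_add_distrib, sum_congr rfl (by simpa only [card_filter] using hx),
    sum_const, smul_eq_mul, mul_comm]

theorem Submodule.exists_linearIndepOn_le_span_inter {k M : Type*} [Field k] [AddCommGroup M]
    [Module k M] {W : ℕ → Submodule k M} (hW : Monotone W) (n : ℕ) :
    ∃ S : Set M, LinearIndepOn k id S ∧ S ⊆ W n ∧ ∀ j < n, W j ≤ span k (S ∩ W j) := by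
  induction n with
  | zero =>
    exact ⟨∅, linearIndepOn_empty k id, Set.empty_subset _, fun j hj => absurd hj j.not_lt_zero⟩
  | succ n ih =>
    obtain ⟨S, hS, hSW, hspan⟩ := ih
    obtain ⟨S', hS'W, hSS', hWS', hS'⟩ := exists_linearIndepOn_id_extension hS hSW
    refine ⟨S', hS', hS'W.trans (hW n.le_succ), fun j hj => ?_⟩
    rcases Nat.lt_succ_iff_lt_or_eq.1 hj with hj | rfl
    · exact (hspan j hj).trans (span_mono (Set.inter_subset_inter_left _ hSS'))
    · rwa [Set.inter_eq_left.2 hS'W]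

section

variable {k V : Type*} [Field k] [AddCommGroup V] [Module k V]

noncomputable def kerIndex (T : V →ₗ[k] V) (v : V) : ℕ := sInf {m : ℕ | (T ^ m) v = 0}

theorem ker_pow_mono (T : V →ₗ[k] V) : Monotone fun m : ℕ => LinearMap.ker (T ^ m) := by
  intro a b hab
  obtain ⟨c, rfl⟩ := Nat.exists_eq_add_of_le' hab
  simpa only [pow_add, Module.End.mul_eq_comp] using LinearMap.ker_le_ker_comp (T ^ a) (T ^ c)

theorem kerIndex_le_iff {T : V →ₗ[k] V} {v : V} (hv : ∃ n, (T ^ n) v = 0) {m : ℕ} :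
    kerIndex T v ≤ m ↔ (T ^ m) v = 0 :=
  ⟨fun h => ker_pow_mono T h (Nat.sInf_mem hv), fun h => Nat.sInf_le h⟩

theorem sum_kerIndex_add_sum_card_filter [DecidableEq V] {T : V →ₗ[k] V} {N : ℕ}
    (hN : T ^ N = 0) (B : Finset V) :
    ∑ b ∈ B, kerIndex T b + ∑ m ∈ range N, #{b ∈ B | (T ^ m) b = 0} = N * #B := by
  have hle : ∀ v m, kerIndex T v ≤ m ↔ (T ^ m) v = 0 := fun v m =>
    kerIndex_le_iff ⟨N, by simp [hN]⟩
  simp only [← hle]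
  exact sum_add_sum_card_filter_le B _ fun b _ => (hle b N).2 (by simp [hN])

theorem coe_filter_apply_eq_zero {W : Type*} [AddCommGroup W] [Module k W] [DecidableEq W]
    (B : Finset V) (f : V →ₗ[k] W) :
    (({b ∈ B | f b = 0} : Finset V) : Set V) = (B : Set V) ∩ LinearMap.ker f := by
  ext
  simp

theorem span_image_inter_le_map {W : Type*} [AddCommGroup W] [Module k W] (s : Set V)
    (U : Submodule k V) (g : V →ₗ[k] W) :
    span k (g '' (s ∩ U)) ≤ U.map g := by
  rw [span_le, map_coe]
  exact Set.image_mono Set.inter_subset_right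

namespace IsQBasis

variable {T : V →ₗ[k] V} {B : Finset V}

theorem finrank_span_image_of_subset (hB : IsQBasis T B) {s : Finset V} (hs : s ⊆ B) :
    finrank k (span k ((LinearMap.range T).mkQ '' s)) = #s := by
  rw [Set.image_eq_range, finrank_span_eq_card (LinearIndepOn.mono hB.2.1 (coe_subset.2 hs))]
  exact Fintype.card_coe s

theorem card_eq_finrank (hB : IsQBasis T B) : #B = finrank k (V ⧸ LinearMap.range T) := by
  rw [← hB.finrank_span_image_of_subset subset_rfl, hB.2.2, finrank_top]

variable [DecidableEq V] [FiniteDimensional k V]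

theorem card_filter_le_finrank (hB : IsQBasis T B) (m : ℕ) :
    #{b ∈ B | (T ^ m) b = 0} ≤ finrank k ((LinearMap.ker (T ^ m)).map (LinearMap.range T).mkQ) := by
  rw [← hB.finrank_span_image_of_subset (filter_subset _ B), coe_filter_apply_eq_zero]
  have h := span_image_inter_le_map B (LinearMap.ker (T ^ m)) (LinearMap.range T).mkQ
  exact Submodule.finrank_mono h

theorem card_filter_eq_finrank_iff (hB : IsQBasis T B) (m : ℕ) :
    #{b ∈ B | (T ^ m) b = 0} = finrank k ((LinearMap.ker (T ^ m)).map (LinearMap.range T).mkQ) ↔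
      (LinearMap.range T).mkQ '' (LinearMap.ker (T ^ m) : Set V) ⊆
        (span k ((LinearMap.range T).mkQ '' ((B : Set V) ∩ (LinearMap.ker (T ^ m) : Set V))) :
          Set (V ⧸ LinearMap.range T)) := by
  have hle := span_image_inter_le_map B (LinearMap.ker (T ^ m)) (LinearMap.range T).mkQ
  rw [← hB.finrank_span_image_of_subset (filter_subset _ B), coe_filter_apply_eq_zero, ← map_coe,
    SetLike.coe_subset_coe]
  exact ⟨fun h => (eq_of_le_of_finrank_eq hle h).ge, fun h => by rw [le_antisymm hle h]⟩

theorem le_sum_kerIndex_add_sum_finrank (hB : IsQBasis T B) {M : ℕ} (hM : T ^ M = 0) :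
    M * finrank k (V ⧸ LinearMap.range T) ≤ ∑ b ∈ B, kerIndex T b +
      ∑ m ∈ range M, finrank k ((LinearMap.ker (T ^ m)).map (LinearMap.range T).mkQ) := by
  rw [← hB.card_eq_finrank, ← sum_kerIndex_add_sum_card_filter hM B]
  gcongr with m
  exact hB.card_filter_le_finrank m

theorem sum_kerIndex_add_sum_finrank_eq_iff (hB : IsQBasis T B) {M : ℕ} (hM : T ^ M = 0) :
    ∑ b ∈ B, kerIndex T b +
        ∑ m ∈ range M, finrank k ((LinearMap.ker (T ^ m)).map (LinearMap.range T).mkQ) =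
      M * finrank k (V ⧸ LinearMap.range T) ↔
    ∀ m < M, (LinearMap.range T).mkQ '' (LinearMap.ker (T ^ m) : Set V) ⊆
      (span k ((LinearMap.range T).mkQ '' ((B : Set V) ∩ (LinearMap.ker (T ^ m) : Set V))) :
        Set (V ⧸ LinearMap.range T)) := by
  rw [← hB.card_eq_finrank, ← sum_kerIndex_add_sum_card_filter hM B, add_right_inj, eq_comm,
    sum_eq_sum_iff_of_le fun m _ => hB.card_filter_le_finrank m]
  simp only [mem_range, hB.card_filter_eq_finrank_iff]

end IsQBasis

theorem isQBasis_image [DecidableEq V] {T : V →ₗ[k] V} {S : Finset (V ⧸ LinearMap.range T)}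
    (hS : LinearIndepOn k id (S : Set (V ⧸ LinearMap.range T)))
    (hspan : span k (S : Set (V ⧸ LinearMap.range T)) = ⊤) {f : V ⧸ LinearMap.range T → V}
    (hf : Function.LeftInverse (LinearMap.range T).mkQ f) : IsQBasis T (S.image f) := by
  have himage : (LinearMap.range T).mkQ '' (S.image f : Set V) = S := by
    rw [coe_image, Set.image_image, funext hf, Set.image_id']
  have hinj : Set.InjOn (LinearMap.range T).mkQ (S.image f : Set V) := by
    refine Set.LeftInvOn.injOn (f₁' := f) ?_
    rintro _ hx
    obtain ⟨w, -, rfl⟩ := mem_image.1 hx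
    rw [hf w]
  exact ⟨hinj, (linearIndepOn_iff_image hinj).2 (by rwa [himage]), by rw [himage, hspan]⟩

theorem exists_mkQ_eq_and_forall_pow_eq_zero {T : V →ₗ[k] V} {N : ℕ} (hN : T ^ N = 0)
    (w : V ⧸ LinearMap.range T) :
    ∃ v, (LinearMap.range T).mkQ v = w ∧
      ∀ m, w ∈ (LinearMap.ker (T ^ m)).map (LinearMap.range T).mkQ → (T ^ m) v = 0 := by
  classical
  have hw : ∃ m, w ∈ (LinearMap.ker (T ^ m)).map (LinearMap.range T).mkQ :=
    ⟨N, by simp [hN]⟩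
  obtain ⟨v, hv, hvw⟩ := mem_map.1 (Nat.find_spec hw)
  exact ⟨v, hvw, fun m hm => ker_pow_mono T (Nat.find_min' hw hm) hv⟩

theorem exists_isQBasis_forall_subset_span [FiniteDimensional k V] {T : V →ₗ[k] V} {N : ℕ}
    (hN : T ^ N = 0) :
    ∃ B : Finset V, IsQBasis T B ∧ ∀ m : ℕ,
      (LinearMap.range T).mkQ '' (LinearMap.ker (T ^ m) : Set V) ⊆
        (span k ((LinearMap.range T).mkQ '' ((B : Set V) ∩ (LinearMap.ker (T ^ m) : Set V))) :
          Set (V ⧸ LinearMap.range T)) := by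
  classical
  set W : ℕ → Submodule k (V ⧸ LinearMap.range T) :=
    fun m => (LinearMap.ker (T ^ m)).map (LinearMap.range T).mkQ
  have hW : Monotone W := fun a b hab => map_mono (ker_pow_mono T hab)
  have hW_top : ∀ j, N ≤ j → W j = ⊤ := fun j hj => by simp [W, pow_eq_zero_of_le hj hN]
  obtain ⟨S, hS, -, hSW⟩ := exists_linearIndepOn_le_span_inter hW (N + 1)
  have hSW' : ∀ j, W j ≤ span k (S ∩ W j) := by
    intro j
    rcases lt_or_ge j (N + 1) with hj | hj
    · exact hSW j hj
    calc W j = W N := by rw [hW_top j (by omega), hW_top N le_rfl]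
      _ ≤ span k (S ∩ W N) := hSW N N.lt_succ_self
      _ ≤ span k (S ∩ W j) := span_mono (Set.inter_subset_inter_right _ (hW (by omega)))
  have hS_top : span k S = ⊤ :=
    eq_top_iff.2 ((hW_top N le_rfl).ge.trans ((hSW' N).trans (span_mono Set.inter_subset_left)))
  have hS_fin : S.Finite := LinearIndependent.setFinite hS
  choose f hqf hf using exists_mkQ_eq_and_forall_pow_eq_zero hN
  refine ⟨hS_fin.toFinset.image f, isQBasis_image (by simpa using hS) (by simpa using hS_top) hqf,
    fun m => ?_⟩
  rw [← map_coe, SetLike.coe_subset_coe]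
  refine (hSW' m).trans (span_mono ?_)
  rintro w ⟨hwS, hwW⟩
  refine ⟨f w, ⟨?_, hf w m hwW⟩, hqf w⟩
  simpa using ⟨w, hwS, rfl⟩

end

theorem stmt1 {k V : Type*} [Field k] [AddCommGroup V] [Module k V]
    [FiniteDimensional k V] (T : V →ₗ[k] V) (hT : ∃ n : ℕ, T ^ n = 0)
    (K : V → ℕ) (hK : ∀ v, K v = sInf {m : ℕ | (T ^ m) v = 0})
    (B : Finset V) (hB : IsQBasis T B) :
    (∀ B' : Finset V, IsQBasis T B' → ∑ b ∈ B, K b ≤ ∑ b ∈ B', K b) ↔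
    ∀ m : ℕ,
      Submodule.mkQ (LinearMap.range T) '' (LinearMap.ker (T ^ m) : Set V) ⊆
        (Submodule.span k (Submodule.mkQ (LinearMap.range T) ''
          ((B : Set V) ∩ (LinearMap.ker (T ^ m) : Set V))) : Set (V ⧸ LinearMap.range T)) := by
  classical
  obtain ⟨N, hN⟩ := hT
  obtain rfl : K = kerIndex T := funext hK
  constructor
  · intro hmin m
    obtain ⟨B₀, hB₀, hB₀_span⟩ := exists_isQBasis_forall_subset_span hN
    have hM : T ^ max N (m + 1) = 0 := pow_eq_zero_of_le (le_max_left _ _) hN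
    have hB₀_eq := (hB₀.sum_kerIndex_add_sum_finrank_eq_iff hM).2 fun j _ => hB₀_span j
    have hB_ge := hB.le_sum_kerIndex_add_sum_finrank hM
    have hB_le := hmin B₀ hB₀
    exact (hB.sum_kerIndex_add_sum_finrank_eq_iff hM).1 (by omega) m (by omega)
  · intro hspan B' hB'
    have hB_eq := (hB.sum_kerIndex_add_sum_finrank_eq_iff hN).2 fun j _ => hspan j
    have hB'_ge := hB'.le_sum_kerIndex_add_sum_finrank hN
    omega
end

section
/- Let M be a matroid and S, T subsets of the ground set obeying the modular law, i.e., rk(S ∪ T) + rk(S ∩ T) = rk(S) + rk(T). Then a subset I ⊆ S is independent in the contraction of S by T (i.e., I ∪ J independent for some basis J of T with I ⊆ S \ T) if and only if I is independent in the contraction of S by S ∩ T. -/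
/-- The rank of a set in a matroid: the maximal cardinality of an independent subset. -/
noncomputable def matroidRk {α : Type*} (M : Matroid α) (S : Set α) : ℕ :=
  sSup {n : ℕ | ∃ I ⊆ S, M.Indep I ∧ I.ncard = n}

/-!
For `I` disjoint from `X`, independence of `I` in `M ／ X` is the rank identity
`rk (I ∪ X) = |I| + rk X`. When `I ⊆ S`, submodularity for the pairs `(I ∪ (S ∩ T), T)` and
`(I ∪ T, S)`, combined with the modularity of `(S, T)`, forces
`rk (I ∪ T) - rk T = rk (I ∪ (S ∩ T)) - rk (S ∩ T)`, so the two rank identities are equivalent.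
-/

open Set

namespace Matroid

variable {α : Type*} {M : Matroid α} {I J X : Set α}

lemma cast_matroidRk (M : Matroid α) [M.RankFinite] (X : Set α) :
    (matroidRk M X : ℕ∞) = M.eRk X := by
  obtain ⟨J, hJ⟩ := M.exists_isBasis' X
  suffices IsGreatest {n : ℕ | ∃ I ⊆ X, M.Indep I ∧ I.ncard = n} J.ncard by
    rw [matroidRk, this.csSup_eq, hJ.indep.finite.cast_ncard_eq, hJ.encard_eq_eRk]
  refine ⟨⟨J, hJ.subset, hJ.indep, rfl⟩, ?_⟩
  rintro n ⟨I, hIX, hI, rfl⟩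
  have hIJ := hI.encard_le_eRk_of_subset hIX
  rwa [← hJ.encard_eq_eRk, ← hI.finite.cast_ncard_eq, ← hJ.indep.finite.cast_ncard_eq,
    Nat.cast_le] at hIJ

lemma matroidRk_inter_add_matroidRk_union_le (M : Matroid α) [M.RankFinite] (X Y : Set α) :
    matroidRk M (X ∩ Y) + matroidRk M (X ∪ Y) ≤ matroidRk M X + matroidRk M Y := by
  have h := M.eRk_inter_add_eRk_union_le X Y
  rw [← cast_matroidRk, ← cast_matroidRk, ← cast_matroidRk, ← cast_matroidRk] at h
  exact_mod_cast h

lemma IsBasis.indep_union_iff_matroidRk [M.RankFinite] (hJ : M.IsBasis J X) (hI : I.Finite)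
    (hIX : Disjoint I X) :
    M.Indep (I ∪ J) ↔ matroidRk M (I ∪ X) = I.ncard + matroidRk M X := by
  rw [← Nat.cast_inj (R := ℕ∞), Nat.cast_add, cast_matroidRk, cast_matroidRk, hI.cast_ncard_eq,
    indep_iff_eRk_eq_encard, union_comm I X, ← hJ.eRk_eq_eRk_union, union_comm J I,
    encard_union_eq (hIX.mono_right hJ.subset), hJ.eRk_eq_encard]

lemma exists_isBasis_indep_union_iff_matroidRk [M.RankFinite] (hX : X ⊆ M.E) (hI : I.Finite)
    (hIX : Disjoint I X) :
    (∃ J, M.IsBasis J X ∧ M.Indep (I ∪ J)) ↔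
      matroidRk M (I ∪ X) = I.ncard + matroidRk M X := by
  obtain ⟨J, hJ⟩ := M.exists_isBasis X
  exact ⟨fun ⟨J', hJ', hIJ'⟩ ↦ (hJ'.indep_union_iff_matroidRk hI hIX).1 hIJ',
    fun h ↦ ⟨J, hJ, (hJ.indep_union_iff_matroidRk hI hIX).2 h⟩⟩

lemma matroidRk_union_add_matroidRk_inter_eq_of_modular [M.RankFinite] {S T : Set α}
    (hmod : matroidRk M (S ∪ T) + matroidRk M (S ∩ T) = matroidRk M S + matroidRk M T)
    (hIS : I ⊆ S) :
    matroidRk M (I ∪ T) + matroidRk M (S ∩ T) = matroidRk M (I ∪ S ∩ T) + matroidRk M T := by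
  have hinter₁ : (I ∪ S ∩ T) ∩ T = S ∩ T := by
    rw [union_inter_distrib_right, inter_assoc, inter_self]
    exact union_eq_right.2 (inter_subset_inter_left T hIS)
  have hunion₁ : (I ∪ S ∩ T) ∪ T = I ∪ T := by
    rw [union_assoc, union_eq_right.2 inter_subset_right]
  have hinter₂ : (I ∪ T) ∩ S = I ∪ S ∩ T := by
    rw [union_inter_distrib_right, inter_eq_left.2 hIS, inter_comm]
  have hunion₂ : (I ∪ T) ∪ S = S ∪ T := by
    rw [union_right_comm, union_eq_right.2 hIS]
  have h₁ := M.matroidRk_inter_add_matroidRk_union_le (I ∪ S ∩ T) T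
  have h₂ := M.matroidRk_inter_add_matroidRk_union_le (I ∪ T) S
  rw [hinter₁, hunion₁] at h₁
  rw [hinter₂, hunion₂] at h₂
  omega

end Matroid

theorem stmt3 {α : Type*} (M : Matroid α) [M.Finite] (S T : Set α)
    (hS : S ⊆ M.E) (hT : T ⊆ M.E)
    (hmod : matroidRk M (S ∪ T) + matroidRk M (S ∩ T) = matroidRk M S + matroidRk M T)
    (I : Set α) (hI : I ⊆ S \ T) :
    (∃ J, M.IsBasis J T ∧ M.Indep (I ∪ J)) ↔
      (∃ J, M.IsBasis J (S ∩ T) ∧ M.Indep (I ∪ J)) := by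
  obtain ⟨hIS, hIT⟩ := subset_sdiff.1 hI
  have hIfin : I.Finite := M.ground_finite.subset (hIS.trans hS)
  rw [Matroid.exists_isBasis_indep_union_iff_matroidRk hT hIfin hIT,
    Matroid.exists_isBasis_indep_union_iff_matroidRk (inter_subset_right.trans hT) hIfin
      (hIT.mono_right inter_subset_right)]
  have := Matroid.matroidRk_union_add_matroidRk_inter_eq_of_modular hmod hIS
  omega
end

section
/- If an independent set I of a matroid freely generates each member of a family S of subsets of the ground set (meaning I ∩ U spans U for every U ∈ S), then the family of sets freely generated by I is closed under unions and binary intersections; in particular, for U, V ∈ S, I ∩ (U ∩ V) spans U ∩ V and I ∩ (U ∪ V) spans U ∪ V. -/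
theorem stmt4 {α : Type*} (M : Matroid α) [M.Finite] (I : Set α) (hI : M.Indep I)
    (S : Set (Set α)) (hE : ∀ U ∈ S, U ⊆ M.E)
    (hgen : ∀ U ∈ S, U ⊆ M.closure (I ∩ U)) :
    ∀ U ∈ S, ∀ V ∈ S,
      (U ∩ V ⊆ M.closure (I ∩ (U ∩ V))) ∧ (U ∪ V ⊆ M.closure (I ∩ (U ∪ V))) := by
  intro U hU V hV
  constructor
  · have hind : M.Indep ((I ∩ U) ∪ (I ∩ V)) :=
      hI.subset (by intro x hx; rcases hx with h | h <;> exact h.1)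
    have h := hind.closure_inter_eq_inter_closure
    have heq : (I ∩ U) ∩ (I ∩ V) = I ∩ (U ∩ V) := by ext x; simp; tauto
    rw [heq] at h
    rw [h]
    exact Set.subset_inter (fun x hx => hgen U hU hx.1) (fun x hx => hgen V hV hx.2)
  · intro x hx
    rcases hx with h | h
    · exact M.closure_subset_closure
        (Set.inter_subset_inter_right I Set.subset_union_left) (hgen U hU h)
    · exact M.closure_subset_closure
        (Set.inter_subset_inter_right I Set.subset_union_right) (hgen V hV h)
end

section
/- Let F : E → ℤ be a weight function on the ground set of a finite matroid M taking finitely many values. A basis B of M has minimum F-weight (weight of B = sum of F(b) over b ∈ B) if and only if for every ε, the set B ∩ {e : F(e) ≤ ε} is a basis of the restriction of M to {e : F(e) ≤ ε}. -/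
/-!
If `B ∩ {F ≤ t}` were not a basis of `{F ≤ t}`, some `x` with `F x ≤ t` could be added to
it, and the fundamental circuit of `x` in `B` then contains some `y ∈ B` with `F y > t`; the base
`B - y + x` is lighter than `B`.

Conversely, the sublevel counts `|B ∩ {F ≤ t}|` of a base with this property are the ranks of the
sets `{F ≤ t}`, so they agree with those of a minimum-weight base. These counts determine the
multiset of weights of a finite set, hence its total weight.
-/

open Finset in
theorem Finset.sum_eq_sum_of_card_filter_le_eq {α : Type*} {s s' : Finset α} (F : α → ℤ)
    (h : ∀ t, #{e ∈ s | F e ≤ t} = #{e ∈ s' | F e ≤ t}) :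
    ∑ e ∈ s, F e = ∑ e ∈ s', F e := by
  classical
  have card_filter_le (u : Finset α) (t : ℤ) :
      #{e ∈ u | F e ≤ t} = #{e ∈ u | F e ≤ t - 1} + #{e ∈ u | t = F e} := by
    rw [← card_union_of_disjoint (disjoint_filter.2 fun e _ h₁ h₂ => by omega), ← filter_or]
    exact congrArg card (filter_congr fun e _ => by omega)
  have hlevel (t : ℤ) : #{e ∈ s | t = F e} = #{e ∈ s' | t = F e} := by
    have := card_filter_le s t
    have := card_filter_le s' t
    have := h t
    have := h (t - 1)
    omega
  rw [sum_eq_multiset_sum, sum_eq_multiset_sum]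
  congr 1
  ext t
  simp only [Multiset.count_map, ← filter_val]
  exact hlevel t

theorem finsum_mem_eq_of_encard_inter_le_eq {α : Type*} {S S' : Set α} (hS : S.Finite)
    (hS' : S'.Finite) (F : α → ℤ)
    (h : ∀ t, (S ∩ {e | F e ≤ t}).encard = (S' ∩ {e | F e ≤ t}).encard) :
    ∑ᶠ e ∈ S, F e = ∑ᶠ e ∈ S', F e := by
  classical
  lift S to Finset α using hS
  lift S' to Finset α using hS'
  rw [finsum_mem_coe_finset, finsum_mem_coe_finset]
  refine Finset.sum_eq_sum_of_card_filter_le_eq F fun t => ?_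
  rw [← Nat.cast_inj (R := ℕ∞), ← Set.encard_coe_eq_coe_finsetCard,
    ← Set.encard_coe_eq_coe_finsetCard, Finset.coe_filter, Finset.coe_filter]
  exact h t

theorem finsum_mem_insert_diff_singleton_add {α β : Type*} [AddCommMonoid β] {B : Set α}
    {x y : α} (hB : B.Finite) (hx : x ∉ B) (hy : y ∈ B) (F : α → β) :
    (∑ᶠ e ∈ insert x (B \ {y}), F e) + F y = (∑ᶠ e ∈ B, F e) + F x := by
  have hBsum := finsum_mem_insert F (fun h => h.2 rfl : y ∉ B \ {y}) hB.sdiff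
  rw [Set.insert_sdiff_self_of_mem hy] at hBsum
  rw [finsum_mem_insert F (fun h => hx h.1) hB.sdiff, hBsum]
  abel

namespace Matroid

variable {α β : Type*} {M : Matroid α}

theorem exists_isBase_forall_finsum_le [LinearOrder β] [AddCommMonoid β] [M.Finite]
    (F : α → β) : ∃ B, M.IsBase B ∧ ∀ B', M.IsBase B' → ∑ᶠ e ∈ B, F e ≤ ∑ᶠ e ∈ B', F e :=
  Set.exists_min_image {B | M.IsBase B} (fun B => ∑ᶠ e ∈ B, F e)
    (M.ground_finite.finite_subsets.subset fun _ hB => hB.subset_ground) M.exists_isBase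

theorem IsBase.isBasis_inter_sublevel_of_forall_finsum_le [AddCommMonoid β] [LinearOrder β]
    [IsOrderedCancelAddMonoid β] [M.RankFinite] {B : Set α} (hB : M.IsBase B) {F : α → β}
    (hmin : ∀ B', M.IsBase B' → ∑ᶠ e ∈ B, F e ≤ ∑ᶠ e ∈ B', F e) (t : β) :
    M.IsBasis (B ∩ {e | F e ≤ t}) {e ∈ M.E | F e ≤ t} := by
  set I := B ∩ {e | F e ≤ t}
  have hI : M.Indep I := hB.indep.subset Set.inter_subset_left
  have hIX : I ⊆ {e ∈ M.E | F e ≤ t} := fun e he => ⟨hB.subset_ground he.1, he.2⟩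
  by_contra hnot
  obtain ⟨J, hJ⟩ := M.exists_isBasis {e ∈ M.E | F e ≤ t} (Set.sep_subset _ _)
  obtain ⟨x, ⟨hxJ, hxI⟩, hxI_indep⟩ := hI.exists_insert_of_not_isBasis hIX hnot hJ
  obtain ⟨hxE, hxt⟩ : x ∈ {e ∈ M.E | F e ≤ t} := hJ.subset hxJ
  have hxB : x ∉ B := fun h => hxI ⟨h, hxt⟩
  have hx_cl : x ∈ M.closure B := hB.closure_eq ▸ hxE
  have hC := hB.indep.fundCircuit_isCircuit hx_cl hxB
  obtain ⟨y, hyC, hyI⟩ := Set.not_subset.1 fun hsub : M.fundCircuit x B ⊆ insert x I =>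
    hC.dep.not_indep (hxI_indep.subset hsub)
  have hyB : y ∈ B := by
    rcases M.fundCircuit_subset_insert x B hyC with rfl | hy
    · exact absurd (Set.mem_insert _ _) hyI
    · exact hy
  have hyt : t < F y := lt_of_not_ge fun hle => hyI (Set.mem_insert_of_mem _ ⟨hyB, hle⟩)
  have hyx : x ≠ y := fun h => hyI (h ▸ Set.mem_insert _ _)
  have hB' : M.IsBase (insert x (B \ {y})) := by
    refine hB.exchange_isBase_of_indep hxB ?_
    rw [Set.insert_sdiff_singleton_comm hyx]
    exact (hB.indep.mem_fundCircuit_iff hx_cl hxB).1 hyC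
  have hweight := finsum_mem_insert_diff_singleton_add hB.finite hxB hyB F
  have hlt := add_lt_add_of_le_of_lt (hmin _ hB') (hxt.trans_lt hyt)
  rw [hweight] at hlt
  exact lt_irrefl _ hlt

end Matroid

theorem stmt6_general {α : Type*} (M : Matroid α) [M.Finite] (F : α → ℤ)
    (B : Set α) (hB : M.IsBase B) :
    (∀ B' : Set α, M.IsBase B' → ∑ᶠ e ∈ B, F e ≤ ∑ᶠ e ∈ B', F e) ↔
    ∀ t : ℤ, M.IsBasis (B ∩ {e | F e ≤ t}) {e ∈ M.E | F e ≤ t} := by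
  refine ⟨hB.isBasis_inter_sublevel_of_forall_finsum_le, fun hbasis B' hB' => ?_⟩
  obtain ⟨B₀, hB₀, hB₀min⟩ := M.exists_isBase_forall_finsum_le F
  have hB₀basis := hB₀.isBasis_inter_sublevel_of_forall_finsum_le hB₀min
  have hweight : ∑ᶠ e ∈ B, F e = ∑ᶠ e ∈ B₀, F e :=
    finsum_mem_eq_of_encard_inter_le_eq hB.finite hB₀.finite F fun t =>
      (hbasis t).encard_eq_encard (hB₀basis t)
  exact hweight ▸ hB₀min B' hB'

theorem stmt6 {α : Type*} (M : Matroid α) [M.Finite] (F : α → ℤ)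
    (hF : (Set.range F).Finite)
    (B : Set α) (hB : M.IsBase B) :
    (∀ B' : Set α, M.IsBase B' → ∑ᶠ e ∈ B, F e ≤ ∑ᶠ e ∈ B', F e) ↔
    ∀ t : ℤ, M.IsBasis (B ∩ {e | F e ≤ t}) {e ∈ M.E | F e ≤ t} :=
  stmt6_general M F B hB
end

section
/- (Exchange Lemma) Let {f, g} be a coproduct structure on W (meaning f : A → W and g : C → W are maps such that (a,c) ↦ f(a) + g(c) is an isomorphism A ⊕ C ≅ W), and let {f^♯, g^♯} be the dual product structure (f^♯ f = 1, g^♯ g = 1, f^♯ g = 0, g^♯ f = 0). Then for a map h : D → W, the pair {f, h} is a coproduct structure on W if and only if g^♯ ∘ h : D → C is invertible. -/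
/-!
Since `f.coprod g` is bijective and `gs = g♯` kills `f` and retracts `g`, the sequence
`0 → A → W → C → 0` formed by `f` and `gs` is short exact. For any `h : D → W`, the map
`f.coprod h : A × D → W` then sits in a map of short exact sequences from `0 → A → A × D → D → 0`
which is the identity on `A` and `gs ∘ h` on the cokernels, so it is bijective exactly when
`gs ∘ h` is (a direct diagram chase).
-/

namespace LinearMap

variable {R A C D W : Type*} [Ring R] [AddCommGroup A] [AddCommGroup C] [AddCommGroup D]
  [AddCommGroup W] [Module R A] [Module R C] [Module R D] [Module R W]
  {f : A →ₗ[R] W} {p : W →ₗ[R] C}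

theorem exact_of_coprod_bijective {g : C →ₗ[R] W} (hco : Function.Bijective (f.coprod g))
    (hpg : p ∘ₗ g = id) (hpf : p ∘ₗ f = 0) : Function.Exact f p := by
  refine exact_of_comp_eq_zero_of_ker_le_range hpf fun w hw => ?_
  obtain ⟨⟨a, c⟩, rfl⟩ := hco.2 w
  have hpfa : p (f a) = 0 := by simpa using congr($hpf a)
  have hpgc : p (g c) = c := by simpa using congr($hpg c)
  have hc : c = 0 := by simpa [hpfa, hpgc] using hw
  exact ⟨a, by simp [hc]⟩

theorem injective_coprod_iff (hexact : Function.Exact f p) (hf : Function.Injective f)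
    (h : D →ₗ[R] W) : Function.Injective (f.coprod h) ↔ Function.Injective (p ∘ₗ h) := by
  simp only [← ker_eq_bot, ker_eq_bot', Prod.forall, Prod.mk_eq_zero, coprod_apply, comp_apply]
  constructor
  · intro hinj d hd
    obtain ⟨a, ha⟩ := (hexact (h d)).1 hd
    exact (hinj (-a) d (by simp [ha])).2
  · intro hinj a d had
    have hd : d = 0 := hinj d (by
      simpa [hexact.apply_apply_eq_zero] using congr(p $had))
    subst hd
    exact ⟨hf (by simpa using had), rfl⟩

theorem surjective_coprod_iff (hexact : Function.Exact f p) (hp : Function.Surjective p)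
    (h : D →ₗ[R] W) : Function.Surjective (f.coprod h) ↔ Function.Surjective (p ∘ₗ h) := by
  constructor
  · intro hsurj c
    obtain ⟨w, rfl⟩ := hp c
    obtain ⟨⟨a, d⟩, rfl⟩ := hsurj w
    exact ⟨d, by simp [hexact.apply_apply_eq_zero]⟩
  · intro hsurj w
    obtain ⟨d, hd⟩ := hsurj (p w)
    have hd : p (h d) = p w := hd
    obtain ⟨a, ha⟩ := (hexact (w - h d)).1 (by rw [map_sub, hd, sub_self])
    exact ⟨(a, d), by simp [ha]⟩

theorem bijective_coprod_iff (hexact : Function.Exact f p) (hf : Function.Injective f)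
    (hp : Function.Surjective p) (h : D →ₗ[R] W) :
    Function.Bijective (f.coprod h) ↔ Function.Bijective (p ∘ₗ h) :=
  and_congr (injective_coprod_iff hexact hf h) (surjective_coprod_iff hexact hp h)

end LinearMap

theorem stmt9_general {k W A C D : Type*} [Field k]
    [AddCommGroup W] [Module k W] [AddCommGroup A] [Module k A]
    [AddCommGroup C] [Module k C] [AddCommGroup D] [Module k D]
    (f : A →ₗ[k] W) (g : C →ₗ[k] W)
    (hco : Function.Bijective (f.coprod g))
    (gs : W →ₗ[k] C)
    (hgg : gs ∘ₗ g = LinearMap.id)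
    (hgf : gs ∘ₗ f = 0)
    (h : D →ₗ[k] W) :
    Function.Bijective (f.coprod h) ↔ Function.Bijective (gs ∘ₗ h) := by
  have hf : Function.Injective f := fun a b hab => by
    simpa using @hco.1 (a, 0) (b, 0) (by simpa using hab)
  have hgs : Function.Surjective gs := fun c => ⟨g c, congr($hgg c)⟩
  exact LinearMap.bijective_coprod_iff (LinearMap.exact_of_coprod_bijective hco hgg hgf) hf hgs h

theorem stmt9 {k W A C D : Type*} [Field k]
    [AddCommGroup W] [Module k W] [AddCommGroup A] [Module k A]
    [AddCommGroup C] [Module k C] [AddCommGroup D] [Module k D]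
    (f : A →ₗ[k] W) (g : C →ₗ[k] W)
    (hco : Function.Bijective (f.coprod g))
    (fs : W →ₗ[k] A) (gs : W →ₗ[k] C)
    (hff : fs ∘ₗ f = LinearMap.id) (hgg : gs ∘ₗ g = LinearMap.id)
    (hfg : fs ∘ₗ g = 0) (hgf : gs ∘ₗ f = 0)
    (h : D →ₗ[k] W) :
    Function.Bijective (f.coprod h) ↔ Function.Bijective (gs ∘ₗ h) :=
  stmt9_general f g hco gs hgg hgf h
end

section
/- Let A be an invertible n×n matrix over a field whose support is acyclic (the transitive closure of {(i,j) : i ≠ j, A(i,j) ≠ 0} is antisymmetric, so A is triangular up to permutation with invertible diagonal). Then A⁻¹(i,j) = ∑_p (−1)^{ℓ(p)+1} A[p], where the sum runs over paths p = (p₀,...,p_m) from i to j supported on the off-diagonal part of A, ℓ(p) = m, and A[p] = A(p₀,p₀)⁻¹A(p₀,p₁)A(p₁,p₁)⁻¹ ··· A(p_m,p_m)⁻¹ (the length-0 path contributing A(i,i)⁻¹ when i = j). -/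
/-!
Write `A = D (1 + N)` with `D` the diagonal of `A` and `N = D⁻¹ (A - D)`. Expanding `(N ^ m) i j`
as a sum over paths of length `m`, a nonzero term needs a path along the support relation of `A`;
by acyclicity such a path has distinct vertices, so `N ^ |I| = 0`. Hence `1 + N` is inverted by the
finite Neumann series `∑ (-N) ^ m`, and `A⁻¹ = (∑ (-N) ^ m) D⁻¹`; since `N` vanishes on the diagonal,
only paths without repeated consecutive vertices contribute.
-/

open Finset Relation Matrix

namespace Relation

variable {α : Type*} {r : α → α → Prop} {n : ℕ} {p : Fin (n + 1) → α}

theorem TransGen.of_rel_castSucc_succ (h : ∀ s : Fin n, r (p s.castSucc) (p s.succ))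
    {s t : Fin (n + 1)} (hst : s < t) : TransGen r (p s) (p t) := by
  refine TransGen.lift p (fun _ _ hab => hab) s t
    (transGen_of_succ_of_lt _ (fun i hi => ?_) hst)
  obtain ⟨i, rfl⟩ := Fin.eq_castSucc_of_ne_last (hi.2.trans_le (Fin.le_last t)).ne
  simpa using h i

theorem injective_of_rel_castSucc_succ (hr : ∀ a, ¬ TransGen r a a)
    (h : ∀ s : Fin n, r (p s.castSucc) (p s.succ)) : Function.Injective p := by
  intro s t hst
  by_contra hne
  rcases lt_or_gt_of_ne hne with hlt | hlt
  · exact hr (p t) (by simpa [hst] using TransGen.of_rel_castSucc_succ h hlt)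
  · exact hr (p s) (by simpa [hst] using TransGen.of_rel_castSucc_succ h hlt)

end Relation

namespace Matrix

section Paths

variable {R I : Type*} [CommSemiring R] [Fintype I] [DecidableEq I]

theorem pow_apply_eq_sum_path (M : Matrix I I R) (m : ℕ) (i j : I) :
    (M ^ m) i j = ∑ p ∈ univ.filter (fun p : Fin (m + 1) → I => p 0 = i ∧ p (Fin.last m) = j),
      ∏ s : Fin m, M (p s.castSucc) (p s.succ) := by
  induction m generalizing j with
  | zero =>
    rw [sum_filter, ← (Equiv.funUnique (Fin 1) I).symm.sum_comp]
    simp [ite_and, one_apply]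
  | succ m ih =>
    rw [pow_succ, mul_apply, sum_filter, ← (Fin.snocEquiv (fun _ => I)).sum_comp,
      Fintype.sum_prod_type]
    simp only [ih, sum_filter, ite_and, sum_mul, ite_mul, zero_mul, Fin.snocEquiv_apply,
      Fin.snoc_apply_zero, Fin.snoc_last, Fin.snoc_castSucc, Fin.prod_univ_castSucc,
      Fin.succ_castSucc, Fin.succ_last]
    rw [sum_comm]
    conv_rhs => rw [sum_comm]
    simp

theorem pow_apply_eq_sum_path_of_diag_eq_zero {M : Matrix I I R} (hM : ∀ a, M a a = 0)
    (m : ℕ) (i j : I) :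
    (M ^ m) i j = ∑ p ∈ univ.filter (fun p : Fin (m + 1) → I =>
        p 0 = i ∧ p (Fin.last m) = j ∧ ∀ s : Fin m, p s.castSucc ≠ p s.succ),
      ∏ s : Fin m, M (p s.castSucc) (p s.succ) := by
  rw [pow_apply_eq_sum_path]
  refine (sum_subset (fun p hp => ?_) fun p hp hp' => ?_).symm
  · simp only [mem_filter, mem_univ, true_and] at hp ⊢
    exact ⟨hp.1, hp.2.1⟩
  · simp only [mem_filter, mem_univ, true_and, not_and, not_forall, not_not] at hp hp'
    obtain ⟨s, hs⟩ := hp' hp.1 hp.2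
    exact prod_eq_zero (mem_univ s) (by rw [hs, hM])

theorem pow_card_eq_zero_of_acyclic {r : I → I → Prop} (hr : ∀ a, ¬ TransGen r a a)
    {M : Matrix I I R} (hM : ∀ a b, M a b ≠ 0 → r a b) : M ^ Fintype.card I = 0 := by
  ext i j
  rw [pow_apply_eq_sum_path, zero_apply]
  refine sum_eq_zero fun p _ => ?_
  obtain ⟨s, hs⟩ : ∃ s : Fin (Fintype.card I), M (p s.castSucc) (p s.succ) = 0 := by
    by_contra! h
    have := Fintype.card_le_of_injective p
      (injective_of_rel_castSucc_succ hr fun s => hM _ _ (h s))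
    simp at this
  exact prod_eq_zero (mem_univ s) hs

end Paths

section NormalizedOffDiag

variable {k I : Type*} [Field k] [DecidableEq I]

def normalizedOffDiag (A : Matrix I I k) : Matrix I I k :=
  of fun a b => if a = b then 0 else (A a a)⁻¹ * A a b

theorem normalizedOffDiag_apply_self (A : Matrix I I k) (a : I) :
    normalizedOffDiag A a a = 0 :=
  if_pos rfl

theorem normalizedOffDiag_apply_of_ne (A : Matrix I I k) {a b : I} (h : a ≠ b) :
    normalizedOffDiag A a b = (A a a)⁻¹ * A a b :=
  if_neg h

theorem ne_and_ne_zero_of_normalizedOffDiag_ne_zero (A : Matrix I I k) (a b : I)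
    (h : normalizedOffDiag A a b ≠ 0) : a ≠ b ∧ A a b ≠ 0 := by
  have hab : a ≠ b := fun hab => h (hab ▸ normalizedOffDiag_apply_self A a)
  refine ⟨hab, fun h0 => h ?_⟩
  rw [normalizedOffDiag_apply_of_ne A hab, h0, mul_zero]

variable [Fintype I]

theorem diagonal_mul_one_add_normalizedOffDiag {A : Matrix I I k} (hdiag : ∀ a, A a a ≠ 0) :
    diagonal (fun a => A a a) * (1 + normalizedOffDiag A) = A := by
  ext a b
  rw [diagonal_mul]
  rcases eq_or_ne a b with rfl | hab
  · simp [normalizedOffDiag_apply_self]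
  · rw [add_apply, one_apply_ne hab, zero_add, normalizedOffDiag_apply_of_ne A hab,
      ← mul_assoc, mul_inv_cancel₀ (hdiag a), one_mul]

theorem inv_eq_sum_neg_pow_normalizedOffDiag_mul {A : Matrix I I k} (hdiag : ∀ a, A a a ≠ 0)
    {n : ℕ} (hn : normalizedOffDiag A ^ n = 0) :
    A⁻¹ = (∑ m ∈ range n, (-normalizedOffDiag A) ^ m) * diagonal (fun a => (A a a)⁻¹) := by
  refine inv_eq_right_inv ?_
  have hgeom : (1 + normalizedOffDiag A) * ∑ m ∈ range n, (-normalizedOffDiag A) ^ m = 1 := by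
    have h := mul_neg_geom_sum (-normalizedOffDiag A) n
    rwa [sub_neg_eq_add, neg_pow, hn, mul_zero, sub_zero] at h
  rw [← mul_assoc]
  nth_rw 1 [← diagonal_mul_one_add_normalizedOffDiag hdiag]
  rw [mul_assoc (diagonal _), hgeom, mul_one, diagonal_mul_diagonal]
  simp [mul_inv_cancel₀ (hdiag _)]

end NormalizedOffDiag

end Matrix

theorem stmt12_general {k I : Type*} [Field k] [Fintype I] [DecidableEq I]
    (A : Matrix I I k)
    (hdiag : ∀ i : I, A i i ≠ 0)
    (hacyc : ∀ i : I, ¬ Relation.TransGen (fun a b => a ≠ b ∧ A a b ≠ 0) i i) :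
    ∀ i j : I, A⁻¹ i j =
      ∑ m ∈ Finset.range (Fintype.card I + 1),
        ∑ p ∈ Finset.univ.filter
            (fun p : Fin (m + 1) → I =>
              p 0 = i ∧ p (Fin.last m) = j ∧ ∀ s : Fin m, p s.castSucc ≠ p s.succ),
          (-1 : k) ^ m *
            (∏ s : Fin m, (A (p s.castSucc) (p s.castSucc))⁻¹ * A (p s.castSucc) (p s.succ)) *
            (A (p (Fin.last m)) (p (Fin.last m)))⁻¹ := by
  have hnil : normalizedOffDiag A ^ (Fintype.card I + 1) = 0 :=
    pow_eq_zero_of_le (Nat.le_succ _)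
      (pow_card_eq_zero_of_acyclic hacyc (ne_and_ne_zero_of_normalizedOffDiag_ne_zero A))
  intro i j
  rw [inv_eq_sum_neg_pow_normalizedOffDiag_mul hdiag hnil, sum_mul, Matrix.sum_apply]
  refine sum_congr rfl fun m _ => ?_
  rw [mul_diagonal, ← neg_one_smul k, smul_pow, Matrix.smul_apply, smul_eq_mul,
    pow_apply_eq_sum_path_of_diag_eq_zero (normalizedOffDiag_apply_self A), mul_sum, sum_mul]
  refine sum_congr rfl fun p hp => ?_
  obtain ⟨-, hj, hstep⟩ := (mem_filter.mp hp).2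
  rw [hj]
  congr 2
  exact prod_congr rfl fun s _ => normalizedOffDiag_apply_of_ne A (hstep s)

theorem stmt12 {k I : Type*} [Field k] [Fintype I] [DecidableEq I]
    (A : Matrix I I k) (hA : IsUnit A)
    (hdiag : ∀ i : I, A i i ≠ 0)
    (hacyc : ∀ i : I, ¬ Relation.TransGen (fun a b => a ≠ b ∧ A a b ≠ 0) i i) :
    ∀ i j : I, A⁻¹ i j =
      ∑ m ∈ Finset.range (Fintype.card I + 1),
        ∑ p ∈ Finset.univ.filter
            (fun p : Fin (m + 1) → I =>
              p 0 = i ∧ p (Fin.last m) = j ∧ ∀ s : Fin m, p s.castSucc ≠ p s.succ),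
          (-1 : k) ^ m *
            (∏ s : Fin m, (A (p s.castSucc) (p s.castSucc))⁻¹ * A (p s.castSucc) (p s.succ)) *
            (A (p (Fin.last m)) (p (Fin.last m)))⁻¹ :=
  stmt12_general A hdiag hacyc
end

section
/- Let A be an invertible square matrix over a field with acyclic support (the off-diagonal support extends to a strict partial order and all diagonal entries are nonzero). Then the transitive closures of Supp(A) and Supp(A⁻¹) are equal. -/
/-!
Matrices supported on the reflexive–transitive closure of a relation form a subalgebra, and by
Cayley–Hamilton `A⁻¹` is a polynomial in `A`; so every nonzero entry of `A⁻¹` is joined by a path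
of off-diagonal nonzero entries of `A`. In `(A * A⁻¹) i i = 1` an off-diagonal term
`A i l * A⁻¹ l i ≠ 0` would close a cycle through `i`, so `A i i * A⁻¹ i i = 1`. Both diagonals are
therefore nonzero, so applied to `A` and to `A⁻¹` these paths show that each support lies in the
transitive closure of the other.
-/

open Polynomial Relation Matrix

namespace Matrix

variable {I R : Type*} [Fintype I] [DecidableEq I]

variable (R) in
def pathSubalgebra [CommSemiring R] (r : I → I → Prop) :
    Subalgebra R (Matrix I I R) where
  carrier := {M | ∀ i j, M i j ≠ 0 → ReflTransGen r i j}
  mul_mem' {M N} hM hN i j h := by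
    obtain ⟨l, -, hl⟩ := Finset.exists_ne_zero_of_sum_ne_zero h
    exact (hM i l (left_ne_zero_of_mul hl)).trans (hN l j (right_ne_zero_of_mul hl))
  add_mem' {M N} hM hN i j h := by
    by_cases hMij : M i j = 0
    · exact hN i j (by simpa [hMij] using h)
    · exact hM i j hMij
  algebraMap_mem' c i j h := by
    obtain rfl : i = j := by
      by_contra hij
      exact h (by simp [algebraMap_eq_diagonal, diagonal_apply_ne _ hij])
    exact ReflTransGen.refl

section CommRing

variable [CommRing R]

theorem inv_mem_adjoin_singleton (A : Matrix I I R) :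
    A⁻¹ ∈ Algebra.adjoin R {A} := by
  by_cases hA : IsUnit A.det
  swap
  · rw [nonsing_inv_apply_not_isUnit A hA]
    exact zero_mem _
  have hc : IsUnit (A.charpoly.coeff 0) :=
    isUnit_of_mul_isUnit_right (A.det_eq_sign_charpoly_coeff ▸ hA)
  -- Cayley–Hamilton, with `charpoly = divX * X + C (coeff 0)`
  have hCH : aeval A A.charpoly.divX * A = -(A.charpoly.coeff 0 • 1) := by
    have h := A.aeval_self_charpoly
    rw [← divX_mul_X_add A.charpoly] at h
    simpa [Algebra.algebraMap_eq_smul_one, add_eq_zero_iff_eq_neg] using h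
  rw [inv_eq_left_inv (B := -(↑hc.unit⁻¹ : R) • aeval A A.charpoly.divX)]
  · exact Subalgebra.smul_mem _ (aeval_mem_adjoin_singleton R A) _
  · rw [neg_smul, neg_mul, smul_mul_assoc, hCH, smul_neg, neg_neg, smul_smul, hc.val_inv_mul,
      one_smul]

theorem reflTransGen_of_inv_apply_ne_zero (A : Matrix I I R) {i j : I}
    (h : A⁻¹ i j ≠ 0) : ReflTransGen (fun a b => a ≠ b ∧ A a b ≠ 0) i j := by
  have hA : A ∈ pathSubalgebra R (fun a b => a ≠ b ∧ A a b ≠ 0) := fun a b hab => by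
    by_cases heq : a = b
    · exact heq ▸ ReflTransGen.refl
    · exact ReflTransGen.single ⟨heq, hab⟩
  exact Algebra.adjoin_singleton_le hA A.inv_mem_adjoin_singleton i j h

theorem transGen_of_inv_apply_ne_zero {A : Matrix I I R}
    (hdiag : ∀ i, A i i ≠ 0) {i j : I} (h : A⁻¹ i j ≠ 0) :
    TransGen (fun a b => A a b ≠ 0) i j :=
  .head' (hdiag i) (ReflTransGen.mono (fun _ _ hab => hab.2) _ _
    (reflTransGen_of_inv_apply_ne_zero A h))

theorem apply_self_mul_inv_apply_self {A : Matrix I I R}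
    (hA : IsUnit A) (hacyc : ∀ i, ¬ TransGen (fun a b => a ≠ b ∧ A a b ≠ 0) i i) (i : I) :
    A i i * A⁻¹ i i = 1 := by
  have h := congr_fun₂ (A.mul_nonsing_inv ((isUnit_iff_isUnit_det A).mp hA)) i i
  rwa [mul_apply, one_apply_eq, Finset.sum_eq_single i _ (by simp)] at h
  intro l _ hli
  by_contra hne
  exact hacyc i (.head' ⟨hli.symm, left_ne_zero_of_mul hne⟩
    (reflTransGen_of_inv_apply_ne_zero A (right_ne_zero_of_mul hne)))

end CommRing

end Matrix

theorem stmt13_general {k I : Type*} [Field k] [Fintype I] [DecidableEq I]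
    (A : Matrix I I k) (hA : IsUnit A)
    (hacyc : ∀ i : I, ¬ Relation.TransGen (fun a b => a ≠ b ∧ A a b ≠ 0) i i) :
    Relation.TransGen (fun i j => A i j ≠ 0) =
      Relation.TransGen (fun i j => A⁻¹ i j ≠ 0) := by
  have hinvinv : A⁻¹⁻¹ = A := A.nonsing_inv_nonsing_inv ((isUnit_iff_isUnit_det A).mp hA)
  have hdiag i : A i i ≠ 0 := left_ne_zero_of_mul_eq_one (apply_self_mul_inv_apply_self hA hacyc i)
  have hdiag_inv i : A⁻¹ i i ≠ 0 :=
    right_ne_zero_of_mul_eq_one (apply_self_mul_inv_apply_self hA hacyc i)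
  refine le_antisymm (TransGen.closed fun i j h => ?_) (TransGen.closed fun i j h => ?_)
  · rw [← hinvinv] at h
    exact transGen_of_inv_apply_ne_zero hdiag_inv h
  · exact transGen_of_inv_apply_ne_zero hdiag h

theorem stmt13 {k I : Type*} [Field k] [Fintype I] [DecidableEq I]
    (A : Matrix I I k) (hA : IsUnit A)
    (hdiag : ∀ i : I, A i i ≠ 0)
    (hacyc : ∀ i : I, ¬ Relation.TransGen (fun a b => a ≠ b ∧ A a b ≠ 0) i i) :
    Relation.TransGen (fun i j => A i j ≠ 0) =
      Relation.TransGen (fun i j => A⁻¹ i j ≠ 0) :=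
  stmt13_general A hA hacyc
end

section
/- An invertible square matrix over a field with acyclic support has exactly one perfect matching: there is a unique bijection σ of the index set such that A(i, σ(i)) ≠ 0 for all i. (In fact σ is the identity-inducing matching given by the diagonal after triangularization.) -/
theorem stmt14 {k I : Type*} [Field k] [Fintype I] [DecidableEq I]
    (A : Matrix I I k) (hA : IsUnit A)
    (hdiag : ∀ i : I, A i i ≠ 0)
    (hacyc : ∀ i : I, ¬ Relation.TransGen (fun a b => a ≠ b ∧ A a b ≠ 0) i i) :
    ∃! σ : Equiv.Perm I, ∀ i : I, A i (σ i) ≠ 0 := by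
  refine ⟨1, fun i => by simpa using hdiag i, ?_⟩
  intro σ hσ
  ext i
  simp only [Equiv.Perm.coe_one, id_eq]
  by_contra h
  set R : I → I → Prop := fun a b => a ≠ b ∧ A a b ≠ 0 with hR
  have hstep : ∀ m : ℕ, R ((σ ^ m) i) ((σ ^ (m + 1)) i) := by
    intro m
    have h1 : (σ ^ (m + 1)) i = (σ ^ m) (σ i) := by
      rw [pow_succ]; rfl
    constructor
    · rw [h1]
      intro he
      exact h ((σ ^ m).injective he).symm
    · have h2 : σ ((σ ^ m) i) = (σ ^ m) (σ i) := by
        rw [← Equiv.Perm.mul_apply, ← pow_succ', pow_succ]; rfl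
      rw [h1, ← h2]
      exact hσ _
  have htrans : ∀ m : ℕ, Relation.TransGen R i ((σ ^ (m + 1)) i) := by
    intro m
    induction m with
    | zero => exact Relation.TransGen.single (by simpa using hstep 0)
    | succ n ih => exact ih.tail (hstep (n + 1))
  obtain ⟨m, hm⟩ : ∃ m, orderOf σ = m + 1 :=
    ⟨orderOf σ - 1, by have := orderOf_pos σ; omega⟩
  have hfin := htrans m
  rw [← hm, pow_orderOf_eq_one, Equiv.Perm.one_apply] at hfin
  exact hacyc i hfin
end

section
/- (Jordan splitting) Let T be an endomorphism of a vector space W (or an object of an abelian category), and let f : A → W and g : W → A be linear maps with T^{n+1} = 0 and g ∘ T^n ∘ f = 1_A. Let K = ⋂_{m=0}^{n} Ker(g ∘ T^m). Then W is the internal direct sum of K and the images of T^0 f, T f, ..., T^n f; i.e., the map K ⊕ A^{n+1} → W sending (w, a₀,...,a_n) to w + ∑_{m=0}^{n} T^m f(a_m) is an isomorphism. -/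
theorem stmt15 {k W A : Type*} [Field k]
    [AddCommGroup W] [Module k W] [AddCommGroup A] [Module k A]
    (T : W →ₗ[k] W) (n : ℕ) (hT : T ^ (n + 1) = 0)
    (f : A →ₗ[k] W) (g : W →ₗ[k] A)
    (hgf : g ∘ₗ (T ^ n) ∘ₗ f = LinearMap.id) :
    Function.Bijective
      (fun p : ↥(⨅ m ∈ Finset.range (n + 1), LinearMap.ker (g ∘ₗ (T ^ m))) ×
          (Fin (n + 1) → A) =>
        (p.1 : W) + ∑ m : Fin (n + 1), (T ^ (m : ℕ)) (f (p.2 m))) := by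
  have hpow : ∀ p, n + 1 ≤ p → (T ^ p : W →ₗ[k] W) = 0 := by
    intro p hp
    obtain ⟨q, rfl⟩ := Nat.exists_eq_add_of_le hp
    rw [pow_add, hT, zero_mul]
  have hid : ∀ a, g ((T ^ n) (f a)) = a := by
    intro a
    have := LinearMap.congr_fun hgf a
    simpa using this
  have hmem : ∀ (w : W),
      w ∈ (⨅ m ∈ Finset.range (n + 1), LinearMap.ker (g ∘ₗ (T ^ m))) ↔
      ∀ m, m ≤ n → g ((T ^ m) w) = 0 := by
    intro w
    simp [Submodule.mem_iInf, Nat.lt_succ_iff]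
  have comb : ∀ (p q : ℕ) (x : W), (T ^ p) ((T ^ q) x) = (T ^ (p + q)) x := by
    intro p q x
    rw [pow_add, Module.End.mul_apply]
  constructor
  · rintro ⟨⟨w₁, hw₁⟩, a₁⟩ ⟨⟨w₂, hw₂⟩, a₂⟩ h
    simp only at h
    have key : (w₁ - w₂) + ∑ m : Fin (n + 1), (T ^ (m : ℕ)) (f (a₁ m - a₂ m)) = 0 := by
      simp only [map_sub, Finset.sum_sub_distrib]
      rw [sub_add_sub_comm, h, sub_self]
    have hwdK : ∀ m, m ≤ n → g ((T ^ m) (w₁ - w₂)) = 0 := by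
      intro m hm
      rw [map_sub, map_sub, (hmem w₁).1 hw₁ m hm, (hmem w₂).1 hw₂ m hm, sub_self]
    have hz : ∀ j, ∀ hj : j < n + 1, a₁ ⟨j, hj⟩ - a₂ ⟨j, hj⟩ = 0 := by
      intro j
      induction j using Nat.strong_induction_on with
      | _ j ih =>
        intro hj
        have hj' : j ≤ n := Nat.lt_succ_iff.mp hj
        have e := congrArg (fun x => g ((T ^ (n - j)) x)) key
        simp only [map_add, map_sum, map_zero] at e
        have hterm : ∀ m : Fin (n + 1),
            g ((T ^ (n - j)) ((T ^ (m : ℕ)) (f (a₁ m - a₂ m)))) =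
            if m = (⟨j, hj⟩ : Fin (n + 1)) then a₁ m - a₂ m else 0 := by
          intro m
          rw [comb]
          rcases lt_trichotomy (m : ℕ) j with h1 | h1 | h1
          · have : a₁ m - a₂ m = 0 := by
              have := ih (m : ℕ) h1 m.isLt
              simpa using this
            rw [this]
            simp only [map_zero]
            rw [if_neg]
            intro hc
            rw [hc] at h1
            exact lt_irrefl _ h1
          · have hm : m = (⟨j, hj⟩ : Fin (n + 1)) := Fin.ext h1
            rw [if_pos hm]
            have : n - j + (m : ℕ) = n := by omega
            rw [this, hid]
          · rw [if_neg]
            · rw [hpow (n - j + (m : ℕ)) (by omega)]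
              simp
            · intro hc
              rw [hc] at h1
              exact lt_irrefl _ h1
        rw [Finset.sum_congr rfl (fun m _ => hterm m)] at e
        rw [Finset.sum_ite_eq' Finset.univ (⟨j, hj⟩ : Fin (n + 1))] at e
        simp only [Finset.mem_univ, if_true] at e
        rw [hwdK (n - j) (Nat.sub_le _ _)] at e
        rw [zero_add] at e
        exact e
    have ha : a₁ = a₂ := by
      funext m
      have := hz (m : ℕ) m.isLt
      simp only [Fin.eta] at this
      exact sub_eq_zero.mp this
    have hw : w₁ = w₂ := by
      have : ∀ m : Fin (n + 1), (T ^ (m : ℕ)) (f (a₁ m - a₂ m)) = 0 := by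
        intro m
        rw [ha, sub_self, map_zero, map_zero]
      rw [Finset.sum_congr rfl (fun m _ => this m), Finset.sum_const_zero, add_zero] at key
      exact sub_eq_zero.mp key
    simp [ha, hw]
  · intro w
    have main : ∀ j, j ≤ n + 1 → ∀ w : W, (∀ i, j ≤ i → i ≤ n → g ((T ^ i) w) = 0) →
        ∃ p : ↥(⨅ m ∈ Finset.range (n + 1), LinearMap.ker (g ∘ₗ (T ^ m))) ×
            (Fin (n + 1) → A),
          (p.1 : W) + ∑ m : Fin (n + 1), (T ^ (m : ℕ)) (f (p.2 m)) = w := by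
      intro j
      induction j with
      | zero =>
        intro _ w hw
        exact ⟨⟨⟨w, (hmem w).2 (fun m hm => hw m (Nat.zero_le _) hm)⟩, 0⟩, by simp⟩
      | succ j ih =>
        intro hj w hw
        have hjn : j ≤ n := Nat.succ_le_succ_iff.mp hj
        set a := g ((T ^ j) w) with ha
        set w' := w - (T ^ (n - j)) (f a) with hw'
        have hcond : ∀ i, j ≤ i → i ≤ n → g ((T ^ i) w') = 0 := by
          intro i hji hin
          rw [hw', map_sub, map_sub]
          rcases eq_or_lt_of_le hji with h1 | h1
          · rw [← h1, comb]
            have : j + (n - j) = n := by omega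
            rw [this, hid, sub_self]
          · rw [comb, hpow (i + (n - j)) (by omega)]
            simp only [LinearMap.zero_apply, map_zero, sub_zero]
            exact hw i h1 hin
        obtain ⟨⟨u, a'⟩, hrep⟩ := ih (Nat.le_of_succ_le hj) w' hcond
        refine ⟨⟨u, a' + Pi.single (⟨n - j, by omega⟩ : Fin (n + 1)) a⟩, ?_⟩
        simp only [Pi.add_apply, map_add, Finset.sum_add_distrib]
        have hsingle : ∑ m : Fin (n + 1),
            (T ^ (m : ℕ)) (f ((Pi.single (⟨n - j, by omega⟩ : Fin (n + 1)) a : Fin (n + 1) → A) m)) =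
            (T ^ (n - j)) (f a) := by
          rw [Finset.sum_eq_single (⟨n - j, by omega⟩ : Fin (n + 1))]
          · rw [Pi.single_eq_same]
          · intro b _ hb
            rw [Pi.single_eq_of_ne hb, map_zero, map_zero]
          · intro hc
            exact absurd (Finset.mem_univ _) hc
        rw [hsingle, ← add_assoc, hrep, hw']
        rw [sub_add_cancel]
    obtain ⟨p, hp⟩ := main (n + 1) le_rfl w (fun i hi hin => absurd (le_trans hi hin) (by omega))
    exact ⟨p, hp⟩
end

section
/- Let T : W → W be a linear operator on a finite-dimensional vector space with T² = 0, and let {f, g, h} be a coproduct structure on W (W ≅ A ⊕ B ⊕ C via f, g, h) such that g^♯ ∘ T ∘ f is invertible, where g^♯ is the projection dual to g. Let e be the idempotent projection onto Ker(g^♯ T) along Im(f). Then (e∘h, f, T∘f) is a coproduct structure on W, and with respect to it the matrix of T is block form [[τ,0,0],[0,0,0],[0,1,0]] for some τ : C → C; in particular T restricted to the complement Im(e h) squares to zero. -/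
theorem stmt17 {k W A B C : Type*} [Field k]
    [AddCommGroup W] [Module k W] [FiniteDimensional k W]
    [AddCommGroup A] [Module k A] [AddCommGroup B] [Module k B]
    [AddCommGroup C] [Module k C]
    (T : W →ₗ[k] W) (hT : T ∘ₗ T = 0)
    (f : A →ₗ[k] W) (g : B →ₗ[k] W) (h : C →ₗ[k] W)
    (hco : Function.Bijective (f.coprod (g.coprod h)))
    (gs : W →ₗ[k] B)
    (hgs₁ : gs ∘ₗ g = LinearMap.id) (hgs₂ : gs ∘ₗ f = 0) (hgs₃ : gs ∘ₗ h = 0)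
    (inv : B →ₗ[k] A)
    (hinv₁ : inv ∘ₗ (gs ∘ₗ T ∘ₗ f) = LinearMap.id)
    (hinv₂ : (gs ∘ₗ T ∘ₗ f) ∘ₗ inv = LinearMap.id)
    (e : W →ₗ[k] W) (he : e ∘ₗ e = e)
    (heker : LinearMap.ker e = LinearMap.range f)
    (herange : LinearMap.range e = LinearMap.ker (gs ∘ₗ T)) :
    Function.Bijective ((e ∘ₗ h).coprod (f.coprod (T ∘ₗ f))) ∧
    ∃ τ : C →ₗ[k] C, ∀ c : C, T (e (h c)) = e (h (τ c)) := by
  -- pointwise versions of hypotheses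
  have Egsf : ∀ a, gs (f a) = 0 := fun a => by
    have := LinearMap.ext_iff.1 hgs₂ a; simpa using this
  have Egsh : ∀ c, gs (h c) = 0 := fun c => by
    have := LinearMap.ext_iff.1 hgs₃ c; simpa using this
  have Einv : ∀ a, inv (gs (T (f a))) = a := fun a => by
    have := LinearMap.ext_iff.1 hinv₁ a; simpa using this
  have Einv2 : ∀ b, gs (T (f (inv b))) = b := fun b => by
    have := LinearMap.ext_iff.1 hinv₂ b; simpa using this
  have ETT : ∀ w, T (T w) = 0 := fun w => by
    have := LinearMap.ext_iff.1 hT w; simpa using this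
  have Eef : ∀ a, e (f a) = 0 := fun a => by
    have : f a ∈ LinearMap.ker e := by rw [heker]; exact ⟨a, rfl⟩
    simpa using this
  have Ee : ∀ x, gs (T (e x)) = 0 := fun x => by
    have : e x ∈ LinearMap.ker (gs ∘ₗ T) := by rw [← herange]; exact ⟨x, rfl⟩
    simpa using this
  -- the formula e = id - f ∘ inv ∘ gs ∘ T
  have Eform : ∀ x, e x = x - f (inv (gs (T x))) := by
    intro x
    have h1 : gs (T (x - f (inv (gs (T x))))) = 0 := by
      simp [map_sub, Einv2]
    have h2 : x - f (inv (gs (T x))) ∈ LinearMap.range e := by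
      rw [herange]; simpa using h1
    obtain ⟨w, hw⟩ := h2
    have h3 : e (x - f (inv (gs (T x)))) = x - f (inv (gs (T x))) := by
      rw [← hw]
      have := LinearMap.ext_iff.1 he w; simpa using this
    have h4 : e (x - f (inv (gs (T x)))) = e x := by
      rw [map_sub, Eef, sub_zero]
    rw [← h4, h3]
  have Egse : ∀ c, gs (e (h c)) = 0 := fun c => by
    rw [Eform]; simp [Egsh, Egsf]
  -- injectivity of f-g-h coproduct gives: h c = f a → c = 0
  have hker0 : ∀ (c : C) (a : A), h c = f a → c = 0 := by
    intro c a hca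
    have : (f.coprod (g.coprod h)) (a, (0, 0)) = (f.coprod (g.coprod h)) (0, (0, c)) := by
      simp [LinearMap.coprod_apply, hca]
    have := hco.injective this
    exact ((Prod.ext_iff.1 ((Prod.ext_iff.1 this).2)).2).symm
  have heh0 : ∀ c : C, e (h c) = 0 → c = 0 := by
    intro c hc
    rw [Eform] at hc
    exact hker0 c _ (by linear_combination (norm := module) hc)
  -- injectivity
  have hinj : Function.Injective ((e ∘ₗ h).coprod (f.coprod (T ∘ₗ f))) := by
    rw [injective_iff_map_eq_zero]
    rintro ⟨c, a, a'⟩ hz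
    simp only [LinearMap.coprod_apply, LinearMap.comp_apply] at hz
    have ha : a = 0 := by
      have h1 : gs (T (e (h c) + (f a + T (f a')))) = 0 := by rw [hz]; simp
      rw [map_add, map_add, map_add, map_add, Ee, ETT, map_zero, zero_add, add_zero] at h1
      rw [← Einv a, h1, map_zero]
    subst ha
    have ha' : a' = 0 := by
      have h1 : gs (e (h c) + (f 0 + T (f a'))) = 0 := by rw [hz]; simp
      simp only [map_add, map_zero, Egse, Egsf, zero_add] at h1
      rw [← Einv a', h1, map_zero]
    subst ha'
    simp only [map_zero, add_zero] at hz
    have hc : c = 0 := heh0 c hz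
    simp [hc]
  -- finite dimensionality of A, B, C
  have hfi : Function.Injective f := by
    intro a₁ a₂ hv
    have : (f.coprod (g.coprod h)) (a₁, (0, 0)) = (f.coprod (g.coprod h)) (a₂, (0, 0)) := by
      simp [LinearMap.coprod_apply, hv]
    exact (Prod.ext_iff.1 (hco.injective this)).1
  have hgi : Function.Injective g := by
    intro b₁ b₂ hv
    have : (f.coprod (g.coprod h)) (0, (b₁, 0)) = (f.coprod (g.coprod h)) (0, (b₂, 0)) := by
      simp [LinearMap.coprod_apply, hv]
    exact (Prod.ext_iff.1 (Prod.ext_iff.1 (hco.injective this)).2).1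
  have hhi : Function.Injective h := by
    intro c₁ c₂ hv
    have : (f.coprod (g.coprod h)) (0, (0, c₁)) = (f.coprod (g.coprod h)) (0, (0, c₂)) := by
      simp [LinearMap.coprod_apply, hv]
    exact (Prod.ext_iff.1 (Prod.ext_iff.1 (hco.injective this)).2).2
  haveI : FiniteDimensional k A := FiniteDimensional.of_injective f hfi
  haveI : FiniteDimensional k B := FiniteDimensional.of_injective g hgi
  haveI : FiniteDimensional k C := FiniteDimensional.of_injective h hhi
  -- dimension count
  have eAB : Module.finrank k A = Module.finrank k B :=
    (LinearEquiv.ofLinear (gs ∘ₗ T ∘ₗ f) inv hinv₂ hinv₁).finrank_eq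
  have eW : Module.finrank k (A × B × C) = Module.finrank k W :=
    (LinearEquiv.ofBijective _ hco).finrank_eq
  have edim : Module.finrank k (C × A × A) = Module.finrank k W := by
    simp only [Module.finrank_prod] at eW ⊢
    omega
  have hsurj : Function.Surjective ((e ∘ₗ h).coprod (f.coprod (T ∘ₗ f))) :=
    (LinearMap.injective_iff_surjective_of_finrank_eq_finrank edim).1 hinj
  refine ⟨⟨hinj, hsurj⟩, ?_⟩
  -- construct τ
  set Φ := (e ∘ₗ h).coprod (f.coprod (T ∘ₗ f)) with hΦ
  let Ψ := LinearEquiv.ofBijective Φ ⟨hinj, hsurj⟩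
  refine ⟨(LinearMap.fst k C (A × A)) ∘ₗ (Ψ.symm : W →ₗ[k] (C × A × A)) ∘ₗ T ∘ₗ e ∘ₗ h,
    fun c => ?_⟩
  have hp : Φ (Ψ.symm (T (e (h c)))) = T (e (h c)) := Ψ.apply_symm_apply _
  set p := Ψ.symm (T (e (h c))) with hpdef
  obtain ⟨c₁, a, a'⟩ := p
  simp only [hΦ, LinearMap.coprod_apply, LinearMap.comp_apply] at hp
  have ha : a = 0 := by
    have h1 : gs (T (e (h c₁) + (f a + T (f a')))) = gs (T (T (e (h c)))) := by rw [hp]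
    rw [ETT, map_zero, map_add, map_add, map_add, map_add, Ee, ETT, map_zero,
      zero_add, add_zero] at h1
    rw [← Einv a, h1, map_zero]
  subst ha
  have ha' : a' = 0 := by
    have h1 : gs (e (h c₁) + (f 0 + T (f a'))) = gs (T (e (h c))) := by rw [hp]
    simp only [map_add, map_zero, Egse, Egsf, Ee, zero_add] at h1
    rw [← Einv a', h1, map_zero]
  subst ha'
  simp only [map_zero, add_zero] at hp
  have hc₁ : ((LinearMap.fst k C (A × A)) ∘ₗ (Ψ.symm : W →ₗ[k] (C × A × A)) ∘ₗ T ∘ₗ e ∘ₗ h) c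
      = c₁ := by
    simp only [LinearMap.comp_apply, LinearEquiv.coe_coe, LinearMap.fst_apply]
    rw [← hpdef]
  rw [hc₁, ← hp]
end

section
/- Let M be a finite matroid with a loop 0, and let T be a nilpotent strong map on M (T(cl(S)) ⊆ cl(T S) for all S, and T^n maps into cl(0) for some n). If T has a Jordan basis (a basis of M expressible as a disjoint union of T-orbits {e, Te, ..., T^m e} of nonzero elements), then for every m ≥ 0, rk(Ker(T^m)) + rk(Im(T^m)) = rk(M), where Ker(T^m) = {e : T^m(e) ∈ cl(0)} and Im(T^m) = T^m(E). -/
/-- The orbit of `e` under `T` : the nonzero (non-loop) iterates of `e`. -/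
def orbOf {α : Type*} (M : Matroid α) (zero : α) (T : α → α) (e : α) : Set α :=
  {v | ∃ m : ℕ, v = T^[m] e ∧ v ∉ M.closure {zero}}

/-!
Every strong map satisfies the rank–nullity inequality `rk Ker T + rk Im T ≤ rk M`: extend a basis
`I` of the kernel to a base `B`; since `T` sends `I` to loops, the image is spanned by
`T '' (B \ I)`. Iterates of strong maps are strong, so this applies to `T^m`.

A Jordan basis `B` gives the reverse inequality. The elements of `B` killed by `T^m` are
independent in the kernel, and `T^m` maps the others back into `B`, injectively: two of them with
the same image lie on one orbit by disjointness, and on one orbit equality would make a non-loop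
point periodic, which nilpotency forbids.
-/

open Set Function

lemma Set.MapsTo.mem_of_isPeriodicPt {α : Type*} {T : α → α} {L : Set α} (hL : MapsTo T L L)
    {n p : ℕ} {y : α} (hy : IsPeriodicPt T p y) (hp : 0 < p) (hn : T^[n] y ∈ L) : y ∈ L := by
  have hy' : T^[p * n - n] (T^[n] y) = y := by
    rw [← iterate_add_apply, Nat.sub_add_cancel (Nat.le_mul_of_pos_left n hp)]
    exact (hy.mul_const n).eq
  exact hy' ▸ hL.iterate _ hn

lemma Set.MapsTo.eq_of_iterate_eq {α : Type*} {T : α → α} {L : Set α} (hL : MapsTo T L L)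
    {n i j : ℕ} {x : α} (hn : T^[n] (T^[i] x) ∈ L) (hi : T^[i] x ∉ L)
    (h : T^[i] x = T^[j] x) : i = j := by
  wlog hij : i ≤ j generalizing i j
  · exact (this (h ▸ hn) (h ▸ hi) h.symm (le_of_not_ge hij)).symm
  obtain ⟨d, rfl⟩ := Nat.exists_eq_add_of_le hij
  rcases d.eq_zero_or_pos with rfl | hd
  · rfl
  refine absurd (hL.mem_of_isPeriodicPt ?_ hd hn) hi
  change T^[d] (T^[i] x) = T^[i] x
  rw [← iterate_add_apply, add_comm, ← h]

namespace Matroid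

variable {α : Type*} {M : Matroid α}

lemma matroidRk_eq_toNat_eRk [M.Finite] (S : Set α) : matroidRk M S = (M.eRk S).toNat := by
  obtain ⟨I, hI⟩ := M.exists_isBasis' S
  have hIfin : I.Finite := M.set_finite I hI.indep.subset_ground
  rw [← hI.encard_eq_eRk, ← hIfin.cast_ncard_eq, ENat.toNat_natCast]
  refine IsGreatest.csSup_eq (s := {n : ℕ | ∃ J ⊆ S, M.Indep J ∧ J.ncard = n})
    ⟨⟨I, hI.subset, hI.indep, rfl⟩, ?_⟩
  rintro _ ⟨J, hJS, hJ, rfl⟩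
  have hJI : J.encard ≤ I.encard := hI.encard_eq_eRk ▸ hJ.encard_le_eRk_of_subset hJS
  rwa [← (M.set_finite J hJ.subset_ground).cast_ncard_eq, ← hIfin.cast_ncard_eq,
    Nat.cast_le] at hJI

def IsStrongMap (M : Matroid α) (T : α → α) : Prop :=
  ∀ S ⊆ M.E, T '' M.closure S ⊆ M.closure (T '' S)

namespace IsStrongMap

variable {T U : α → α}

lemma mapsTo_ground (hT : M.IsStrongMap T) : MapsTo T M.E M.E := by
  intro e he
  exact M.closure_subset_ground _ (hT M.E subset_rfl ⟨e, M.subset_closure M.E subset_rfl he, rfl⟩)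

lemma mapsTo_loops (hT : M.IsStrongMap T) : MapsTo T M.loops M.loops := by
  intro e he
  have h := hT ∅ (empty_subset _) (mem_image_of_mem T he)
  rwa [image_empty] at h

lemma comp (hT : M.IsStrongMap T) (hU : M.IsStrongMap U) : M.IsStrongMap (T ∘ U) := by
  intro S hS
  rw [image_comp, image_comp]
  exact (image_mono (hU S hS)).trans (hT _ (hU.mapsTo_ground.mono_left hS).image_subset)

lemma iterate (hT : M.IsStrongMap T) (k : ℕ) : M.IsStrongMap T^[k] := by
  induction k with
  | zero => simp [IsStrongMap]
  | succ k ih => rw [iterate_succ']; exact hT.comp ih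

lemma eRk_ker_add_eRk_image_le (hT : M.IsStrongMap T) :
    M.eRk {e ∈ M.E | T e ∈ M.loops} + M.eRk (T '' M.E) ≤ M.eRank := by
  obtain ⟨I, hI⟩ := M.exists_isBasis' {e ∈ M.E | T e ∈ M.loops}
  obtain ⟨B, hB, hIB⟩ := hI.indep.exists_isBase_superset
  have hspan : T '' M.E ⊆ M.closure (T '' (B \ I)) := by
    have hTB : T '' B ⊆ T '' (B \ I) ∪ M.loops := by
      rintro _ ⟨b, hb, rfl⟩
      by_cases hbI : b ∈ I
      · exact Or.inr (hI.subset hbI).2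
      · exact Or.inl ⟨b, ⟨hb, hbI⟩, rfl⟩
    calc T '' M.E = T '' M.closure B := by rw [hB.closure_eq]
      _ ⊆ M.closure (T '' B) := hT B hB.subset_ground
      _ ⊆ M.closure (T '' (B \ I) ∪ M.loops) := M.closure_subset_closure hTB
      _ = M.closure (T '' (B \ I)) := M.closure_union_loops_eq _
  have hIm : M.eRk (T '' M.E) ≤ (B \ I).encard :=
    calc M.eRk (T '' M.E) ≤ M.eRk (M.closure (T '' (B \ I))) := M.eRk_mono hspan
      _ = M.eRk (T '' (B \ I)) := M.eRk_closure_eq _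
      _ ≤ (T '' (B \ I)).encard := M.eRk_le_encard _
      _ ≤ (B \ I).encard := encard_image_le T _
  calc M.eRk {e ∈ M.E | T e ∈ M.loops} + M.eRk (T '' M.E) ≤ I.encard + (B \ I).encard := by
        rw [← hI.encard_eq_eRk]; exact add_le_add_right hIm _
    _ = M.eRank := by rw [add_comm, encard_sdiff_add_encard_of_subset hIB, hB.encard_eq_eRank]

end IsStrongMap

end Matroid

open Matroid

section Orbit

variable {α : Type*} {M : Matroid α} {zero : α} {T : α → α} {S B : Set α}

lemma iterate_mem_of_eq_iUnion_orbOf (hBS : B = ⋃ e ∈ S, orbOf M zero T e) {b : α} (hb : b ∈ B)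
    {m : ℕ} (hm : T^[m] b ∉ M.closure {zero}) : T^[m] b ∈ B := by
  subst hBS
  simp only [mem_iUnion] at hb ⊢
  obtain ⟨e, he, k, rfl, -⟩ := hb
  exact ⟨e, he, m + k, by rw [iterate_add_apply], hm⟩

lemma injOn_iterate_of_eq_iUnion_orbOf (hBS : B = ⋃ e ∈ S, orbOf M zero T e)
    (hL : MapsTo T (M.closure {zero}) (M.closure {zero})) {n : ℕ}
    (hn : ∀ x ∈ B, T^[n] x ∈ M.closure {zero})
    (hdisj : ∀ e ∈ S, ∀ e' ∈ S, e ≠ e' → Disjoint (orbOf M zero T e) (orbOf M zero T e'))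
    (m : ℕ) :
    InjOn T^[m] {b ∈ B | T^[m] b ∉ M.closure {zero}} := by
  subst hBS
  rintro a ⟨ha, hma⟩ b ⟨hb, -⟩ hab
  simp only [mem_iUnion] at ha hb
  obtain ⟨e₁, he₁, i, rfl, -⟩ := ha
  obtain ⟨e₂, he₂, j, rfl, -⟩ := hb
  simp only [← iterate_add_apply] at hab hma
  obtain rfl : e₁ = e₂ := by
    by_contra hne
    exact (hdisj e₁ he₁ e₂ he₂ hne).ne_of_mem ⟨m + i, rfl, hma⟩ ⟨m + j, hab, hma⟩ rfl
  have hmem : T^[m + i] e₁ ∈ ⋃ e ∈ S, orbOf M zero T e := mem_biUnion he₁ ⟨m + i, rfl, hma⟩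
  obtain rfl : i = j := by have := hL.eq_of_iterate_eq (hn _ hmem) hma hab; omega
  rfl

lemma Matroid.IsStrongMap.eRank_le_eRk_ker_add_eRk_image (hT : M.IsStrongMap T)
    (hzero : M.IsLoop zero) {n : ℕ} (hn : ∀ e ∈ M.E, T^[n] e ∈ M.closure {zero})
    (hB : M.IsBase B) (hBS : B = ⋃ e ∈ S, orbOf M zero T e)
    (hdisj : ∀ e ∈ S, ∀ e' ∈ S, e ≠ e' → Disjoint (orbOf M zero T e) (orbOf M zero T e'))
    (m : ℕ) :
    M.eRank ≤ M.eRk {e ∈ M.E | T^[m] e ∈ M.closure {zero}} + M.eRk (T^[m] '' M.E) := by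
  set K := {e ∈ M.E | T^[m] e ∈ M.closure {zero}}
  have hL : MapsTo T (M.closure {zero}) (M.closure {zero}) := by
    rw [hzero.closure]; exact hT.mapsTo_loops
  have hX : B \ K ⊆ {b ∈ B | T^[m] b ∉ M.closure {zero}} :=
    fun b hb => ⟨hb.1, fun h => hb.2 ⟨hB.subset_ground hb.1, h⟩⟩
  have hinj : InjOn T^[m] (B \ K) := (injOn_iterate_of_eq_iUnion_orbOf hBS hL
    (fun x hx => hn x (hB.subset_ground hx)) hdisj m).mono hX
  have hJB : T^[m] '' (B \ K) ⊆ B :=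
    image_subset_iff.2 fun b hb => iterate_mem_of_eq_iUnion_orbOf hBS (hX hb).1 (hX hb).2
  calc M.eRank = (T^[m] '' (B \ K)).encard + (B ∩ K).encard := by
        rw [hinj.encard_image, encard_sdiff_add_encard_inter, hB.encard_eq_eRank]
    _ ≤ M.eRk (T^[m] '' M.E) + M.eRk K :=
        add_le_add ((hB.indep.subset hJB).encard_le_eRk_of_subset
          (image_mono (sdiff_subset.trans hB.subset_ground)))
          ((hB.indep.subset inter_subset_left).encard_le_eRk_of_subset inter_subset_right)
    _ = M.eRk K + M.eRk (T^[m] '' M.E) := add_comm _ _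

end Orbit

theorem stmt18_general {α : Type*} (M : Matroid α) [M.Finite]
    (zero : α) (hzero : zero ∈ M.closure ∅)
    (T : α → α)
    (hstrong : ∀ S ⊆ M.E, T '' M.closure S ⊆ M.closure (T '' S))
    (hnil : ∃ n : ℕ, ∀ e ∈ M.E, T^[n] e ∈ M.closure {zero})
    (hJordan : ∃ (B : Set α) (S : Set α), M.IsBase B ∧
      B = ⋃ e ∈ S, orbOf M zero T e ∧
      (∀ e ∈ S, ∀ e' ∈ S, e ≠ e' →
        Disjoint (orbOf M zero T e) (orbOf M zero T e'))) :
    ∀ m : ℕ,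
      matroidRk M {e ∈ M.E | T^[m] e ∈ M.closure {zero}} +
        matroidRk M (T^[m] '' M.E) = matroidRk M M.E := by
  intro m
  obtain ⟨n, hn⟩ := hnil
  obtain ⟨B, S, hB, hBS, hdisj⟩ := hJordan
  have hT : M.IsStrongMap T := hstrong
  have hle := (hT.iterate m).eRk_ker_add_eRk_image_le
  rw [← IsLoop.closure hzero] at hle
  have hge := hT.eRank_le_eRk_ker_add_eRk_image hzero hn hB hBS hdisj m
  have hfin (X : Set α) : M.eRk X ≠ ⊤ := (M.isRkFinite_set X).eRk_lt_top.ne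
  rw [matroidRk_eq_toNat_eRk, matroidRk_eq_toNat_eRk, matroidRk_eq_toNat_eRk,
    ← ENat.toNat_add (hfin _) (hfin _), le_antisymm hle hge, eRk_ground]

theorem stmt18 {α : Type*} (M : Matroid α) [M.Finite]
    (zero : α) (hzero : zero ∈ M.closure ∅)
    (T : α → α) (hTE : ∀ e ∈ M.E, T e ∈ M.E)
    (hstrong : ∀ S ⊆ M.E, T '' M.closure S ⊆ M.closure (T '' S))
    (hnil : ∃ n : ℕ, ∀ e ∈ M.E, T^[n] e ∈ M.closure {zero})
    (hJordan : ∃ (B : Set α) (S : Set α), M.IsBase B ∧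
      B = ⋃ e ∈ S, orbOf M zero T e ∧
      (∀ e ∈ S, ∀ e' ∈ S, e ≠ e' →
        Disjoint (orbOf M zero T e) (orbOf M zero T e'))) :
    ∀ m : ℕ,
      matroidRk M {e ∈ M.E | T^[m] e ∈ M.closure {zero}} +
        matroidRk M (T^[m] '' M.E) = matroidRk M M.E :=
  stmt18_general M zero hzero T hstrong hnil hJordan
end
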